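/- arXiv:1106.5387 — 6 statements merged into one kernel-verified Lean document; each statement's English description precedes it below -/
import Mathlib

section
/- (Lemma 3.) Fix integers n ≥ 1, 0 ≤ k ≤ n and m ≥ 1. There exists a constant C, depending only on n, m and k (not on q or the subspace), such that for every prime power q, every finite field F with |F| = q, and every k-dimensional subspace Π_k of F^n, the following holds: if Π is the span of m vectors chosen independently and uniformly at random from F^n, then Prob[ dim(Π ∩ Π_k) = max(min(m,n) + k − n, 0) ] ≥ 1 − C/q. -/
/-!
Reveal `v 0, v 1, …` one at a time. If every `v i` avoids the span of its predecessors while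
`i < n`, and the span of its predecessors together with `Πk` while `i + k < n`, then
`dim Π = min(m, n)` and `dim (Π + Πk) = min(m + k, n)`, and the dimension formula gives
`dim (Π ∩ Πk)`. Each subspace to be avoided has dimension at most `n - 1` and does not depend
on `v i`, so `v i` falls into it with probability at most `1/q`; a union bound over the `2m`
events gives `C = 2m`.
-/

open scoped Classical

open Module Submodule Finset

section Resampling

variable {ι W : Type*} [Fintype ι] [DecidableEq ι] [Fintype W]

theorem Fintype.sum_sum_update {M : Type*} [AddCommMonoid M] (f : (ι → W) → M) (i : ι) :
    ∑ v, ∑ x, f (Function.update v i x) = Fintype.card W • ∑ v, f v := by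
  let e : (ι → W) × W → (ι → W) × W := fun p => (Function.update p.1 i p.2, p.1 i)
  have he : Function.Involutive e := fun p => by simp [e]
  rw [← Fintype.sum_prod_type', ← Equiv.sum_comp (he.toPerm e),
    Fintype.sum_prod_type, Finset.smul_sum]
  simp [e]

theorem card_filter_apply_mem_mul_le (i : ι) (U : (ι → W) → Finset W)
    (hU : ∀ v x, U (Function.update v i x) = U v) {B : ℕ} (hB : ∀ v, #(U v) ≤ B) :
    Fintype.card W * #{v | v i ∈ U v} ≤ Fintype.card (ι → W) * B := by
  calc Fintype.card W * #{v | v i ∈ U v}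
      = ∑ v, ∑ x, if Function.update v i x i ∈ U (Function.update v i x) then 1 else 0 := by
        rw [Fintype.sum_sum_update (fun v => if v i ∈ U v then 1 else 0), Finset.card_filter,
          smul_eq_mul]
    _ = ∑ v, #(U v) := by simp [hU]
    _ ≤ Fintype.card (ι → W) * B := by
        simpa using Finset.sum_le_sum fun v (_ : v ∈ Finset.univ) => hB v

end Resampling

section PrefixSpan

variable {F V : Type*} [Field F] [AddCommGroup V] [Module F V] {m : ℕ}

variable (F) in
def prefixSpan (v : Fin m → V) (i : ℕ) : Submodule F V :=
  span F (v '' {j | (j : ℕ) < i})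

theorem prefixSpan_zero (v : Fin m → V) : prefixSpan F v 0 = ⊥ := by
  simp [prefixSpan]

theorem prefixSpan_succ (v : Fin m → V) {i : ℕ} (hi : i < m) :
    prefixSpan F v (i + 1) = prefixSpan F v i ⊔ span F {v ⟨i, hi⟩} := by
  have : {j : Fin m | (j : ℕ) < i + 1} = {j : Fin m | (j : ℕ) < i} ∪ {⟨i, hi⟩} := by
    ext j; simp [Fin.ext_iff]; omega
  rw [prefixSpan, this, Set.image_union, Set.image_singleton, span_union, prefixSpan]

theorem prefixSpan_self (v : Fin m → V) : prefixSpan F v m = span F (Set.range v) := by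
  simp [prefixSpan]

theorem finrank_prefixSpan_le (v : Fin m → V) (i : ℕ) : finrank F (prefixSpan F v i) ≤ i := by
  have : v '' {j | (j : ℕ) < i} = ((univ.filter fun j : Fin m => (j : ℕ) < i).image v : Set V) := by
    simp
  calc finrank F (prefixSpan F v i)
      ≤ #((univ.filter fun j : Fin m => (j : ℕ) < i).image v) := by
        rw [prefixSpan, this]; exact finrank_span_finset_le_card _
    _ ≤ #(univ.filter fun j : Fin m => (j : ℕ) < i) := card_image_le
    _ ≤ i := by rw [Fin.card_filter_val_lt]; exact min_le_right _ _

theorem prefixSpan_update_self (v : Fin m → V) (i : Fin m) (x : V) :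
    prefixSpan F (Function.update v i x) i = prefixSpan F v i := by
  rw [prefixSpan, prefixSpan, Set.image_congr]
  intro j hj
  exact Function.update_of_ne (Fin.ne_of_val_ne (ne_of_lt hj)) _ _

end PrefixSpan

section Generic

variable {F V : Type*} [Field F] [AddCommGroup V] [Module F V] [FiniteDimensional F V] {m : ℕ}

def AvoidsPrefixSpans (W : Submodule F V) (v : Fin m → V) : Prop :=
  ∀ i : Fin m, (i : ℕ) + finrank F W < finrank F V → v i ∉ prefixSpan F v i ⊔ W

theorem AvoidsPrefixSpans.le_finrank_sup {W : Submodule F V} {v : Fin m → V}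
    (hv : AvoidsPrefixSpans W v) :
    finrank F W + min m (finrank F V - finrank F W) ≤ finrank F ↥(span F (Set.range v) ⊔ W) := by
  suffices key : ∀ i ≤ m, finrank F W + min i (finrank F V - finrank F W) ≤
      finrank F ↥(prefixSpan F v i ⊔ W) by
    rw [← prefixSpan_self]; exact key m le_rfl
  intro i
  induction i with
  | zero => intro; rw [prefixSpan_zero, bot_sup_eq]; omega
  | succ i ih =>
    intro hi
    have hsucc : prefixSpan F v (i + 1) ⊔ W = (prefixSpan F v i ⊔ W) ⊔ span F {v ⟨i, hi⟩} := by
      rw [prefixSpan_succ v hi, sup_right_comm]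
    by_cases hiW : i + finrank F W < finrank F V
    · have hvi : v ⟨i, hi⟩ ∉ prefixSpan F v i ⊔ W := hv ⟨i, hi⟩ hiW
      rw [hsucc, finrank_sup_span_singleton hvi]
      have := ih (Nat.le_of_succ_le hi)
      omega
    · have := ih (Nat.le_of_succ_le hi)
      have : finrank F ↥(prefixSpan F v i ⊔ W) ≤ finrank F ↥(prefixSpan F v (i + 1) ⊔ W) := by
        rw [hsucc]; exact finrank_mono le_sup_left
      omega

theorem finrank_span_range_inf_of_avoids {W : Submodule F V} {v : Fin m → V}
    (hbot : AvoidsPrefixSpans (⊥ : Submodule F V) v) (hW : AvoidsPrefixSpans W v) :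
    finrank F ↥(span F (Set.range v) ⊓ W) = min m (finrank F V) + finrank F W - finrank F V := by
  have hS := hbot.le_finrank_sup
  rw [finrank_bot, sup_bot_eq, Nat.sub_zero, zero_add] at hS
  have hSW := hW.le_finrank_sup
  have hSm : finrank F (span F (Set.range v)) ≤ m := by
    simpa [Set.finrank] using finrank_range_le_card (R := F) v
  have hSn := (span F (Set.range v)).finrank_le
  have hSWn := (span F (Set.range v) ⊔ W).finrank_le
  have hWn := W.finrank_le
  have hSW_le := (span F (Set.range v)).finrank_add_le_finrank_add_finrank W
  have hsum := (span F (Set.range v)).finrank_sup_add_finrank_inf_eq W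
  omega

end Generic

section Counting

variable {F V : Type*} [Field F] [Fintype F] [AddCommGroup V] [Module F V] [Fintype V] {m : ℕ}

theorem card_mem_prefixSpan_sup_mul_le (W : Submodule F V) (i : Fin m) :
    Fintype.card F * #{v : Fin m → V | (i : ℕ) + finrank F W < finrank F V ∧
      v i ∈ prefixSpan F v i ⊔ W} ≤ Fintype.card (Fin m → V) := by
  by_cases hi : (i : ℕ) + finrank F W < finrank F V
  swap
  · simp [hi]
  set d := finrank F V
  have hcard : ∀ P : Submodule F V, #(P : Set V).toFinset = Fintype.card F ^ finrank F P := by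
    intro P
    rw [Set.toFinset_card, ← Module.card_eq_pow_finrank]
    rfl
  have hbound : ∀ v : Fin m → V, #((prefixSpan F v i ⊔ W : Submodule F V) : Set V).toFinset ≤
      Fintype.card F ^ (d - 1) := by
    intro v
    rw [hcard]
    refine Nat.pow_le_pow_right Fintype.card_pos ?_
    have := finrank_add_le_finrank_add_finrank (prefixSpan F v i) W
    have := finrank_prefixSpan_le (F := F) v i
    omega
  have key := card_filter_apply_mem_mul_le i
    (fun v => ((prefixSpan F v i ⊔ W : Submodule F V) : Set V).toFinset)
    (fun v x => by simp only [prefixSpan_update_self]) hbound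
  simp only [Set.mem_toFinset, SetLike.mem_coe] at key
  have hV : Fintype.card V = Fintype.card F ^ (d - 1) * Fintype.card F := by
    rw [← pow_succ, Nat.sub_add_cancel (by omega), Module.card_eq_pow_finrank (K := F)]
  rw [hV] at key
  simp only [hi, true_and]
  exact Nat.le_of_mul_le_mul_left (by linarith) (pow_pos Fintype.card_pos _)

theorem card_not_avoidsPrefixSpans_mul_le (W : Submodule F V) :
    Fintype.card F * #{v : Fin m → V | ¬ AvoidsPrefixSpans W v} ≤ m * Fintype.card (Fin m → V) := by
  have hsub : ({v : Fin m → V | ¬ AvoidsPrefixSpans W v} : Finset (Fin m → V)) ⊆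
      univ.biUnion fun i : Fin m =>
      {v : Fin m → V | (i : ℕ) + finrank F W < finrank F V ∧ v i ∈ prefixSpan F v i ⊔ W} := by
    intro v hv
    simp only [AvoidsPrefixSpans, not_forall, not_not, mem_filter, mem_univ, true_and] at hv
    obtain ⟨i, hi, hvi⟩ := hv
    exact mem_biUnion.mpr ⟨i, mem_univ _, by simp [hi, hvi]⟩
  calc Fintype.card F * #{v : Fin m → V | ¬ AvoidsPrefixSpans W v}
      ≤ ∑ i : Fin m, Fintype.card F * #{v : Fin m → V | (i : ℕ) + finrank F W < finrank F V ∧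
          v i ∈ prefixSpan F v i ⊔ W} := by
        rw [← mul_sum]; exact Nat.mul_le_mul_left _ ((card_le_card hsub).trans card_biUnion_le)
    _ ≤ ∑ _i : Fin m, Fintype.card (Fin m → V) :=
        sum_le_sum fun i _ => card_mem_prefixSpan_sup_mul_le W i
    _ = m * Fintype.card (Fin m → V) := by simp

theorem one_sub_le_card_filter_finrank_span_range_inf_div (W : Submodule F V) :
    1 - (2 * m : ℝ) / Fintype.card F ≤
      (#{v : Fin m → V | finrank F ↥(span F (Set.range v) ⊓ W) =
        min m (finrank F V) + finrank F W - finrank F V} : ℝ) / Fintype.card (Fin m → V) := by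
  set N := Fintype.card (Fin m → V)
  set q := Fintype.card F
  set good := ({v : Fin m → V | finrank F ↥(span F (Set.range v) ⊓ W) =
    min m (finrank F V) + finrank F W - finrank F V} : Finset (Fin m → V))
  set bad := ({v : Fin m → V | ¬ AvoidsPrefixSpans (⊥ : Submodule F V) v ∨
    ¬ AvoidsPrefixSpans W v} : Finset (Fin m → V))
  have hcover : N ≤ #good + #bad := by
    calc N = #(univ : Finset (Fin m → V)) := card_univ.symm
      _ ≤ #(good ∪ bad) := card_le_card fun v _ => by
          by_cases h : AvoidsPrefixSpans (⊥ : Submodule F V) v ∧ AvoidsPrefixSpans W v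
          · exact mem_union_left _ (by simp [good, finrank_span_range_inf_of_avoids h.1 h.2])
          · exact mem_union_right _ (by simp only [bad, mem_filter, mem_univ, true_and]; tauto)
      _ ≤ #good + #bad := card_union_le _ _
  have hbad : q * #bad ≤ 2 * m * N := by
    have hbot := card_not_avoidsPrefixSpans_mul_le (m := m) (⊥ : Submodule F V)
    have hW := card_not_avoidsPrefixSpans_mul_le (m := m) W
    have : #bad ≤ #{v : Fin m → V | ¬ AvoidsPrefixSpans (⊥ : Submodule F V) v} +
        #{v : Fin m → V | ¬ AvoidsPrefixSpans W v} := by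
      simp only [bad, filter_or]; exact card_union_le _ _
    calc q * #bad ≤ q * #{v : Fin m → V | ¬ AvoidsPrefixSpans (⊥ : Submodule F V) v} +
          q * #{v : Fin m → V | ¬ AvoidsPrefixSpans W v} := by
          rw [← mul_add]; exact Nat.mul_le_mul_left q this
      _ ≤ 2 * m * N := by linarith
  have hq : (0 : ℝ) < q := by exact_mod_cast Fintype.card_pos
  have hN : (0 : ℝ) < N := by exact_mod_cast Fintype.card_pos
  have hcoverR : (N : ℝ) ≤ #good + #bad := by exact_mod_cast hcover
  have hbadR : (q : ℝ) * #bad ≤ 2 * m * N := by exact_mod_cast hbad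
  calc 1 - (2 * m : ℝ) / q ≤ 1 - #bad / N := by
        refine sub_le_sub_left ?_ 1
        rw [div_le_div_iff₀ hN hq]
        linarith
    _ ≤ #good / N := by
        rw [sub_le_iff_le_add, ← add_div, le_div_iff₀ hN]
        linarith

end Counting

theorem stmt_3_general (n k m : ℕ) :
    ∃ C : ℝ, ∀ (q : ℕ), IsPrimePow q →
      ∀ (F : Type) [Field F] [Fintype F], Fintype.card F = q →
      ∀ (Sk : Submodule F (Fin n → F)), Module.finrank F ↥Sk = k →
      1 - C / q ≤
        ((Finset.univ.filter (fun v : Fin m → (Fin n → F) =>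
            Module.finrank F ↥(Submodule.span F (Set.range v) ⊓ Sk)
              = min m n + k - n)).card : ℝ) / (q : ℝ) ^ (m * n) := by
  refine ⟨2 * m, fun q _ F _ _ hq Sk hSk => ?_⟩
  have hN : Fintype.card (Fin m → Fin n → F) = q ^ (m * n) := by
    simp [hq, ← pow_mul, mul_comm]
  have h := one_sub_le_card_filter_finrank_span_range_inf_div (m := m) Sk
  rw [hN, hq, hSk, finrank_fin_fun] at h
  exact_mod_cast h

/-- Lemma 3: for fixed `n, k, m` there is a constant `C` such that for every
prime power `q`, every finite field `F` with `|F| = q` and every `k`-dimensional subspace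
`Πk` of `F^n`, the span `Π` of `m` uniformly random vectors of `F^n` satisfies
`dim (Π ∩ Πk) = (min(m,n) + k − n)^+` with probability at least `1 − C/q`. -/
theorem stmt_3 (n k m : ℕ) (hn : 1 ≤ n) (hk : k ≤ n) (hm : 1 ≤ m) :
    ∃ C : ℝ, ∀ (q : ℕ), IsPrimePow q →
      ∀ (F : Type) [Field F] [Fintype F], Fintype.card F = q →
      ∀ (Sk : Submodule F (Fin n → F)), Module.finrank F ↥Sk = k →
      1 - C / q ≤
        ((Finset.univ.filter (fun v : Fin m → (Fin n → F) =>
            Module.finrank F ↥(Submodule.span F (Set.range v) ⊓ Sk)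
              = min m n + k - n)).card : ℝ) / (q : ℝ) ^ (m * n) :=
  stmt_3_general n k m
end

section
/- (Lemma 5: consecutive subspace sampling.) Fix t ≥ 1, n ≥ 1, dimensions d_0 < d_1 < ⋯ < d_{t−1} ≤ n, and integers k_u(1), …, k_u(t) and k_v(1), …, k_v(t) satisfying 1 ≤ k_u(1) < d_0, 1 ≤ k_v(1) < d_0, and k_u(j) ≤ d_{j−1} − d_{j−2}, k_v(j) ≤ d_{j−1} − d_{j−2} for j = 2, …, t. There exists a constant C, depending only on these fixed parameters, such that for every prime power q and every chain of subspaces Π(0) ⊂ Π(1) ⊂ ⋯ ⊂ Π(t−1) of F_q^n with dim(Π(j)) = d_j, the following holds. For j = 1, …, t let π_u(j) be the span of k_u(j) vectors chosen independently and uniformly at random from Π(j−1) and let π_v(j) be the span of k_v(j) vectors chosen independently and uniformly at random from Π(j−1) (all samples mutually independent), and set Π_u(i) = π_u(1) + ⋯ + π_u(i) and Π_v(i) = π_v(1) + ⋯ + π_v(i). Then with probability at least 1 − C/q: Π_u(i) ⊄ Π_v(j) and Π_v(j) ⊄ Π_u(i) for all i, j ∈ {1, …, t}. -/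
/-!
Call a tuple `y` of samples generic if every vector drawn from `P a`, `a ≥ 1`, avoids `P (a - 1)`
plus the span of the vectors drawn before it from the same level. That subspace has dimension
`< dim P a`, so each of these conditions fails with probability at most `1/q`. For generic `y` the
levels `a ≥ 1` span a subspace disjoint from `P 0` (modular law), so the full span of `y` meets
`P 0` only in the span of the `k 0 < dim P 0` vectors of level `0`. An inclusion
`Π_u(i) ≤ Π_v(j)` puts the first `u`-vector of level `0` into the full span of the `v`-vectors;
as that vector is independent of the `v`-vectors, this has probability at most `1/q` when they
are generic. The inclusions `Π_v(j) ≤ Π_u(i)` are handled symmetrically.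
-/

open scoped Classical

open Finset Function Module Submodule

theorem Submodule.card_mul_card_filter_mem_le {F V : Type*} [Field F] [Fintype F]
    [AddCommGroup V] [Module F V] [Fintype V] {S W : Submodule F V} (h : ¬ S ≤ W) :
    Fintype.card F * #{x : S | (x : V) ∈ W} ≤ Fintype.card S := by
  set W' := W.comap S.subtype
  have hW' : W' < ⊤ := lt_top_iff_ne_top.2 fun htop => h (comap_subtype_eq_top.1 htop)
  have hcard : #{x : S | (x : V) ∈ W} = Fintype.card W' := by
    rw [Fintype.card_subtype]; rfl
  have hrank : finrank F W' < finrank F S :=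
    (Submodule.finrank_lt_finrank_of_lt hW').trans_eq (finrank_top F S)
  rw [hcard, card_eq_pow_finrank (K := F) (V := W'), card_eq_pow_finrank (K := F) (V := S),
    ← pow_succ']
  exact Nat.pow_le_pow_right Fintype.card_pos hrank

theorem card_mul_card_filter_le_of_forall_fiber {α β : Type*} [Fintype α] [Fintype β]
    (p : α × β → Prop) [DecidablePred p] {c : ℕ}
    (h : ∀ b, c * #{a | p (a, b)} ≤ Fintype.card α) :
    c * #{x | p x} ≤ Fintype.card (α × β) := by
  have hsum : #{x | p x} = ∑ b, #{a | p (a, b)} := by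
    simp only [card_filter]
    rw [Fintype.sum_prod_type, Finset.sum_comm]
  calc c * #{x | p x} = ∑ b, c * #{a | p (a, b)} := by rw [hsum, mul_sum]
    _ ≤ ∑ _b : β, Fintype.card α := sum_le_sum fun b _ => h b
    _ = Fintype.card (α × β) := by simp [Fintype.card_prod, mul_comm]

theorem card_mul_card_filter_le_of_forall_update {ι : Type*} [Fintype ι] [DecidableEq ι]
    {β : ι → Type*} [∀ i, Fintype (β i)] (i : ι) (p : (∀ j, β j) → Prop)
    [DecidablePred p] {c : ℕ} (h : ∀ ω, c * #{x | p (update ω i x)} ≤ Fintype.card (β i)) :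
    c * #{ω | p ω} ≤ Fintype.card (∀ j, β j) := by
  set e := Equiv.piSplitAt i β
  have hcard : #{ω | p ω} = #{z | p (e.symm z)} := by
    simp only [← Fintype.card_subtype]
    exact Fintype.card_congr (e.subtypeEquiv fun ω => by simp)
  rw [hcard, Fintype.card_congr e]
  refine card_mul_card_filter_le_of_forall_fiber (fun z => p (e.symm z)) fun r => ?_
  obtain hβ | ⟨⟨x₀⟩⟩ := isEmpty_or_nonempty (β i)
  · simp
  have hline : ∀ x, update (e.symm (x₀, r)) i x = e.symm (x, r) := by
    intro x; funext j
    by_cases hj : j = i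
    · subst hj; simp [e]
    · simp [e, hj]
  simpa only [hline] using h (e.symm (x₀, r))

theorem card_filter_exists_le_sum {Ω ι : Type*} [Fintype Ω] [Fintype ι] (p : ι → Ω → Prop)
    [∀ i, DecidablePred (p i)] [DecidablePred fun ω => ∃ i, p i ω] :
    #{ω | ∃ i, p i ω} ≤ ∑ i, #{ω | p i ω} := by
  refine (card_le_card fun ω hω => ?_).trans card_biUnion_le
  obtain ⟨i, hi⟩ := (mem_filter.1 hω).2
  exact mem_biUnion.2 ⟨i, mem_univ i, mem_filter.2 ⟨mem_univ ω, hi⟩⟩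

theorem Finset.disjoint_sup_of_forall_disjoint {α ι : Type*} [Lattice α] [OrderBot α]
    [IsModularLattice α] [LinearOrder ι] (s : Finset ι) (f g : ι → α) (c : α)
    (hfg : ∀ a ∈ s, ∀ b ∈ s, b < a → f b ≤ g a)
    (hdisj : ∀ a ∈ s, Disjoint (f a) (g a ⊔ c)) :
    Disjoint (s.sup f) c := by
  induction s using Finset.induction_on_max with
  | empty => exact disjoint_bot_left
  | insert a s hlt ih =>
    rw [sup_insert]
    have hs : s.sup f ≤ g a :=
      Finset.sup_le fun b hb => hfg a (mem_insert_self a s) b (mem_insert_of_mem hb) (hlt b hb)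
    refine Disjoint.disjoint_sup_left_of_disjoint_sup_right ?_ ?_
    · exact ih (fun a' ha' b hb => hfg a' (mem_insert_of_mem ha') b (mem_insert_of_mem hb))
        fun a' ha' => hdisj a' (mem_insert_of_mem ha')
    · exact (hdisj a (mem_insert_self a s)).mono_right (sup_le_sup_right hs c)

theorem Submodule.disjoint_span_range_of_forall_notMem {F V : Type*} [Field F] [AddCommGroup V]
    [Module F V] {k : ℕ} (y : Fin k → V) (X : Submodule F V)
    (h : ∀ b, y b ∉ span F (y '' Set.Iio b) ⊔ X) : Disjoint (span F (Set.range y)) X := by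
  rw [span_range_eq_iSup, ← Finset.sup_univ_eq_iSup]
  refine univ.disjoint_sup_of_forall_disjoint _ (fun b => span F (y '' Set.Iio b)) X
    (fun a _ b _ hba => span_singleton_le_iff_mem _ _ |>.2 (subset_span ⟨b, hba, rfl⟩))
    fun b _ => (disjoint_span_singleton.2 fun hb => absurd hb (h b)).symm

section Samples

variable {F V : Type*} [Field F] [AddCommGroup V] [Module F V]

abbrev Samples (t : ℕ) (k : ℕ → ℕ) (P : ℕ → Submodule F V) : Type _ :=
  (a : Fin t) → Fin (k a) → P a

variable {t : ℕ} {k k' : ℕ → ℕ} {P : ℕ → Submodule F V}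

def levelSpan (y : Samples t k P) (a : Fin t) : Submodule F V :=
  span F (Set.range fun b => (y a b : V))

def partialSpan (y : Samples t k P) (i : Fin t) : Submodule F V :=
  ∑ a ∈ Iic i, levelSpan y a

def PartialSpansIncomparable (u : Samples t k P) (v : Samples t k' P) : Prop :=
  ∀ i j, ¬ partialSpan u i ≤ partialSpan v j ∧ ¬ partialSpan v j ≤ partialSpan u i

def IsGeneric (y : Samples t k P) : Prop :=
  ∀ a : Fin t, 0 < (a : ℕ) → ∀ b,
    (y a b : V) ∉ span F ((fun b' => (y a b' : V)) '' Set.Iio b) ⊔ P (a - 1)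

theorem levelSpan_le (y : Samples t k P) (a : Fin t) : levelSpan y a ≤ P a :=
  span_le.2 <| Set.range_subset_iff.2 fun b => (y a b).2

theorem IsGeneric.sum_levelSpan_inf_eq {y : Samples t k P} (hy : IsGeneric y)
    (hP : MonotoneOn P (Set.Iio t)) (ht : 0 < t) :
    (∑ a, levelSpan y a) ⊓ P 0 = levelSpan y ⟨0, ht⟩ := by
  set z : Fin t := ⟨0, ht⟩
  have hPle : ∀ {m l : ℕ}, m ≤ l → l < t → P m ≤ P l := fun hml hl =>
    hP (Set.mem_Iio.2 (hml.trans_lt hl)) (Set.mem_Iio.2 hl) hml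
  have hdisj : Disjoint ((univ.erase z).sup (levelSpan y)) (P 0) := by
    refine (univ.erase z).disjoint_sup_of_forall_disjoint _ (fun a => P (a - 1)) _
      (fun a _ b _ hba => (levelSpan_le y b).trans (hPle (by omega) (by omega))) fun a ha => ?_
    have ha : 0 < (a : ℕ) := Nat.pos_of_ne_zero fun h => (mem_erase.1 ha).1 (Fin.ext h)
    rw [sup_eq_left.2 (hPle (Nat.zero_le _) (by omega))]
    exact disjoint_span_range_of_forall_notMem _ _ (hy a ha)
  rw [← add_sum_erase _ _ (mem_univ z), Submodule.add_eq_sup,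
    sup_inf_assoc_of_le _ (levelSpan_le y z)]
  -- a finite sum of submodules is, definitionally, their `Finset.sup`
  change levelSpan y z ⊔ (univ.erase z).sup (levelSpan y) ⊓ P 0 = _
  rw [hdisj.eq_bot, sup_bot_eq]

theorem IsGeneric.not_le_sum_levelSpan {y : Samples t k P}
    (hy : IsGeneric y) (hP : MonotoneOn P (Set.Iio t)) (ht : 0 < t)
    (hk : k 0 < finrank F (P 0)) : ¬ P 0 ≤ ∑ a, levelSpan y a := by
  intro h
  have hle : P 0 ≤ levelSpan y ⟨0, ht⟩ := by
    rw [← hy.sum_levelSpan_inf_eq hP ht]; exact le_inf h le_rfl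
  have : Module.Finite F (levelSpan y ⟨0, ht⟩) :=
    Module.Finite.span_of_finite F (Set.finite_range _)
  have := (Submodule.finrank_mono hle).trans (finrank_range_le_card _)
  simp only [Fintype.card_fin] at this
  omega

theorem card_mul_card_filter_sample_mem_le [Fintype F] [Fintype V] (a : Fin t) (b : Fin (k a))
    (W : Samples t k P → Submodule F V)
    (hW : ∀ y x, W (update y a (update (y a) b x)) = W y) (hP : ∀ y, ¬ P a ≤ W y) :
    Fintype.card F * #{y | (y a b : V) ∈ W y} ≤ Fintype.card (Samples t k P) := by
  refine card_mul_card_filter_le_of_forall_update a _ fun y => ?_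
  refine card_mul_card_filter_le_of_forall_update b _ fun f => ?_
  have hWf : ∀ x, W (update y a (update f b x)) = W (update y a f) := fun x => by
    simpa using hW (update y a f) x
  simp only [update_self, hWf]
  exact card_mul_card_filter_mem_le (hP _)

theorem card_mul_card_filter_mem_span_Iio_sup_le [Fintype F] [Fintype V] {a : Fin t}
    (b : Fin (k a)) (hk : k a ≤ finrank F (P a) - finrank F (P (a - 1))) :
    Fintype.card F * #{y : Samples t k P |
        (y a b : V) ∈ span F ((fun b' => (y a b' : V)) '' Set.Iio b) ⊔ P (a - 1)}
      ≤ Fintype.card (Samples t k P) := by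
  have : FiniteDimensional F V := Module.Finite.of_finite
  refine card_mul_card_filter_sample_mem_le a b _ (fun y x => ?_) fun y hle => ?_
  · simp only [update_self]
    congr 2
    exact Set.image_congr fun b' hb' => by rw [update_of_ne (ne_of_lt hb')]
  · have hspan : finrank F (span F ((fun b' => (y a b' : V)) '' Set.Iio b)) ≤ b := by
      rw [Set.image_eq_range]
      exact (finrank_range_le_card _).trans (by simp)
    have := (Submodule.finrank_mono hle).trans
      ((Submodule.finrank_add_le_finrank_add_finrank _ _).trans (Nat.add_le_add_right hspan _))
    have := b.2
    omega

theorem card_mul_card_filter_not_isGeneric_le [Fintype F] [Fintype V]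
    (hk : ∀ a : Fin t, 0 < (a : ℕ) → k a ≤ finrank F (P a) - finrank F (P (a - 1))) :
    Fintype.card F * #{y : Samples t k P | ¬ IsGeneric y}
      ≤ (∑ a : Fin t, k a) * Fintype.card (Samples t k P) := by
  set bad : (Σ a : Fin t, Fin (k a)) → Samples t k P → Prop := fun p y => 0 < (p.1 : ℕ) ∧
    (y p.1 p.2 : V) ∈ span F ((fun b' => (y p.1 b' : V)) '' Set.Iio p.2) ⊔ P (p.1 - 1)
  have hbad : ∀ p, Fintype.card F * #{y | bad p y} ≤ Fintype.card (Samples t k P) := by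
    rintro ⟨a, b⟩
    by_cases ha : 0 < (a : ℕ)
    · simpa only [bad, ha, true_and] using card_mul_card_filter_mem_span_Iio_sup_le b (hk a ha)
    · simp [bad, ha]
  calc Fintype.card F * #{y : Samples t k P | ¬ IsGeneric y}
      ≤ Fintype.card F * ∑ p, #{y | bad p y} := by
        refine Nat.mul_le_mul_left _ (le_of_eq_of_le ?_ (card_filter_exists_le_sum _))
        congr 1
        refine filter_congr fun y _ => ?_
        simp [IsGeneric, bad]
    _ ≤ ∑ _p : Σ a : Fin t, Fin (k a), Fintype.card (Samples t k P) := by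
        rw [mul_sum]; exact sum_le_sum fun p _ => hbad p
    _ = (∑ a : Fin t, k a) * Fintype.card (Samples t k P) := by simp

theorem mem_sum_levelSpan_of_partialSpan_le {u : Samples t k P} {v : Samples t k' P}
    {i j : Fin t} (h : partialSpan u i ≤ partialSpan v j) (ht : 0 < t) (b : Fin (k 0)) :
    (u ⟨0, ht⟩ b : V) ∈ ∑ a, levelSpan v a := by
  have hu : (u ⟨0, ht⟩ b : V) ∈ levelSpan u ⟨0, ht⟩ := subset_span ⟨b, rfl⟩
  have hui : levelSpan u ⟨0, ht⟩ ≤ partialSpan u i :=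
    single_le_sum (fun _ _ => zero_le) (mem_Iic.2 (Fin.mk_le_of_le_val (Nat.zero_le _)))
  have hvj : partialSpan v j ≤ ∑ a, levelSpan v a := sum_le_sum_of_subset (subset_univ _)
  exact hvj (h (hui hu))

theorem card_mul_card_filter_mem_sum_levelSpan_le [Fintype F] [Fintype V]
    (hP : MonotoneOn P (Set.Iio t)) (ht : 0 < t) (hk'0 : k' 0 < finrank F (P 0))
    (hk' : ∀ a : Fin t, 0 < (a : ℕ) → k' a ≤ finrank F (P a) - finrank F (P (a - 1)))
    (b : Fin (k 0)) :
    Fintype.card F *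
        #{x : Samples t k P × Samples t k' P | (x.1 ⟨0, ht⟩ b : V) ∈ ∑ a, levelSpan x.2 a}
      ≤ (∑ a : Fin t, k' a + 1) * Fintype.card (Samples t k P × Samples t k' P) := by
  set mem : Samples t k P × Samples t k' P → Prop :=
    fun x => (x.1 ⟨0, ht⟩ b : V) ∈ ∑ a, levelSpan x.2 a
  have hgeneric : Fintype.card F * #{x | IsGeneric x.2 ∧ mem x}
      ≤ Fintype.card (Samples t k P × Samples t k' P) := by
    refine card_mul_card_filter_le_of_forall_fiber _ fun v => ?_
    by_cases hv : IsGeneric v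
    · simp only [hv, true_and, mem]
      exact card_mul_card_filter_sample_mem_le (t := t) ⟨0, ht⟩ b
        (fun _ => ∑ a, levelSpan v a) (fun _ _ => rfl) fun _ => hv.not_le_sum_levelSpan hP ht hk'0
    · simp [hv]
  have hnongeneric : #{x : Samples t k P × Samples t k' P | ¬ IsGeneric x.2}
      = Fintype.card (Samples t k P) * #{v : Samples t k' P | ¬ IsGeneric v} := by
    rw [← card_univ, ← card_product]
    congr 1
    ext x
    simp
  have hsplit : #{x | mem x} ≤
      #{x : Samples t k P × Samples t k' P | ¬ IsGeneric x.2} +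
        #{x | IsGeneric x.2 ∧ mem x} := by
    refine (card_le_card fun x hx => ?_).trans (card_union_le _ _)
    by_cases hx' : IsGeneric x.2 <;> simp_all
  have hcount := Nat.mul_le_mul_left (Fintype.card (Samples t k P))
    (card_mul_card_filter_not_isGeneric_le (P := P) hk')
  refine (Nat.mul_le_mul_left _ hsplit).trans ?_
  rw [Fintype.card_prod] at hgeneric ⊢
  rw [mul_add, hnongeneric]
  linarith

theorem card_mul_card_filter_not_partialSpansIncomparable_le [Fintype F] [Fintype V]
    (hP : MonotoneOn P (Set.Iio t)) (ht : 0 < t) (hk0 : 0 < k 0) (hk'0 : 0 < k' 0)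
    (hk0' : k 0 < finrank F (P 0)) (hk'0' : k' 0 < finrank F (P 0))
    (hk : ∀ a : Fin t, 0 < (a : ℕ) → k a ≤ finrank F (P a) - finrank F (P (a - 1)))
    (hk' : ∀ a : Fin t, 0 < (a : ℕ) → k' a ≤ finrank F (P a) - finrank F (P (a - 1))) :
    Fintype.card F * #{x : Samples t k P × Samples t k' P | ¬ PartialSpansIncomparable x.1 x.2}
      ≤ (∑ a : Fin t, (k' a + k a) + 2) * Fintype.card (Samples t k P × Samples t k' P) := by
  set u₀ : Fin (k 0) := ⟨0, hk0⟩
  set v₀ : Fin (k' 0) := ⟨0, hk'0⟩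
  have hsplit : #{x : Samples t k P × Samples t k' P | ¬ PartialSpansIncomparable x.1 x.2}
      ≤ #{x : Samples t k P × Samples t k' P |
            (x.1 ⟨0, ht⟩ u₀ : V) ∈ ∑ a, levelSpan x.2 a} +
        #{x : Samples t k P × Samples t k' P |
            (x.2 ⟨0, ht⟩ v₀ : V) ∈ ∑ a, levelSpan x.1 a} := by
    refine (card_le_card fun x hx => ?_).trans (card_union_le _ _)
    simp only [PartialSpansIncomparable, mem_filter, mem_univ, true_and, not_forall, not_and_or,
      not_not] at hx
    obtain ⟨i, j, h | h⟩ := hx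
    · exact mem_union_left _ (by simpa using mem_sum_levelSpan_of_partialSpan_le h ht u₀)
    · exact mem_union_right _ (by simpa using mem_sum_levelSpan_of_partialSpan_le h ht v₀)
  have hswap :
      #{x : Samples t k P × Samples t k' P | (x.2 ⟨0, ht⟩ v₀ : V) ∈ ∑ a, levelSpan x.1 a}
        = #{x : Samples t k' P × Samples t k P |
            (x.1 ⟨0, ht⟩ v₀ : V) ∈ ∑ a, levelSpan x.2 a} :=
    card_equiv (Equiv.prodComm _ _) (by simp)
  have huv := card_mul_card_filter_mem_sum_levelSpan_le hP ht hk'0' hk' u₀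
  have hvu := card_mul_card_filter_mem_sum_levelSpan_le hP ht hk0' hk v₀
  rw [Fintype.card_congr (Equiv.prodComm _ _)] at hvu
  refine (Nat.mul_le_mul_left _ hsplit).trans ?_
  rw [mul_add, hswap, sum_add_distrib]
  linarith

end Samples

theorem one_sub_div_le_card_filter_div {Ω : Type*} [Fintype Ω] [Nonempty Ω] (p : Ω → Prop)
    [DecidablePred p] {q C : ℕ} (hq : 0 < q) (h : q * #{ω | ¬ p ω} ≤ C * Fintype.card Ω) :
    1 - (C : ℝ) / q ≤ #{ω | p ω} / Fintype.card Ω := by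
  have hΩ : (0 : ℝ) < Fintype.card Ω := by exact_mod_cast Fintype.card_pos
  have hsplit : (#{ω | p ω} : ℝ) + #{ω | ¬ p ω} = Fintype.card Ω := by
    exact_mod_cast (card_filter_add_card_filter_not p).trans card_univ
  have hbad : (#{ω | ¬ p ω} : ℝ) ≤ C / q * Fintype.card Ω := by
    rw [div_mul_eq_mul_div, le_div_iff₀ (by exact_mod_cast hq), mul_comm]
    exact_mod_cast h
  rw [le_div_iff₀ hΩ]
  linarith

theorem stmt_7_general (t n : ℕ) (ht : 1 ≤ t)
    (d ku kv : ℕ → ℕ)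
    (hku0 : 1 ≤ ku 0) (hku0' : ku 0 < d 0)
    (hkv0 : 1 ≤ kv 0) (hkv0' : kv 0 < d 0)
    (hku : ∀ j, 1 ≤ j → j < t → ku j ≤ d j - d (j - 1))
    (hkv : ∀ j, 1 ≤ j → j < t → kv j ≤ d j - d (j - 1)) :
    ∃ C : ℝ, ∀ (q : ℕ), IsPrimePow q →
      ∀ (F : Type) [Field F] [Fintype F], Fintype.card F = q →
      ∀ (P : ℕ → Submodule F (Fin n → F)),
        (∀ j, j + 1 < t → P j < P (j + 1)) →
        (∀ j, j < t → Module.finrank F ↥(P j) = d j) →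
      1 - C / q ≤
        ((Finset.univ.filter
            (fun ω : (j : Fin t) →
                ((Fin (ku j) → ↥(P j)) × (Fin (kv j) → ↥(P j))) =>
              ∀ i j : Fin t,
                ¬ (∑ a ∈ Finset.Iic i, Submodule.span F
                      (Set.range (fun b => ((ω a).1 b : Fin n → F))) ≤
                    ∑ a ∈ Finset.Iic j, Submodule.span F
                      (Set.range (fun b => ((ω a).2 b : Fin n → F)))) ∧
                ¬ (∑ a ∈ Finset.Iic j, Submodule.span F
                      (Set.range (fun b => ((ω a).2 b : Fin n → F))) ≤
                    ∑ a ∈ Finset.Iic i, Submodule.span F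
                      (Set.range (fun b => ((ω a).1 b : Fin n → F)))))).card : ℝ)
          / (Fintype.card ((j : Fin t) →
              ((Fin (ku j) → ↥(P j)) × (Fin (kv j) → ↥(P j)))) : ℝ) := by
  refine ⟨(∑ a : Fin t, (kv a + ku a) + 2 : ℕ), fun q _ F _ _ hq P hP hrank => ?_⟩
  have hmono : MonotoneOn P (Set.Iio t) :=
    monotoneOn_of_le_add_one Set.ordConnected_Iio fun a _ _ ha => (hP a ha).le
  have hdim : ∀ k : ℕ → ℕ, (∀ j, 1 ≤ j → j < t → k j ≤ d j - d (j - 1)) →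
      ∀ a : Fin t, 0 < (a : ℕ) → k a ≤ finrank F (P a) - finrank F (P (a - 1)) := by
    intro k hk a ha
    rw [hrank a a.2, hrank (a - 1) (by omega)]
    exact hk a ha a.2
  subst hq
  have hbad := card_mul_card_filter_not_partialSpansIncomparable_le hmono ht hku0 hkv0
    ((hrank 0 ht).symm ▸ hku0') ((hrank 0 ht).symm ▸ hkv0') (hdim ku hku) (hdim kv hkv)
  set e := Equiv.arrowProdEquivProdArrow (Fin t) (fun j => Fin (ku j) → P j)
    (fun j => Fin (kv j) → P j)
  refine one_sub_div_le_card_filter_div _ Fintype.card_pos ?_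
  rwa [card_equiv e (t := {x | ¬ PartialSpansIncomparable x.1 x.2})
    fun ω => by simp only [mem_filter, mem_univ, true_and]; rfl, Fintype.card_congr e]

/-- Lemma 5: consecutive subspace sampling. Subspaces and samples are
0-indexed: `P j` is the paper's `Π(j)` (for `j < t`), the sample at index `j` (drawn from
`P j`) is the paper's `π(j+1)`, and `k j` is the paper's `k(j+1)`. For fixed parameters
there is a constant `C` such that for every prime power `q` and every chain
`P 0 ⊂ ⋯ ⊂ P (t−1)` of subspaces of `F_q^n` with `dim (P j) = d j`, if for each `j < t`
the subspace `π_u(j)` is the span of `ku j` uniformly random vectors of `P j` and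
`π_v(j)` the span of `kv j` uniformly random vectors of `P j` (all independent), and
`Π_u(i) = π_u(0) + ⋯ + π_u(i)`, `Π_v(i) = π_v(0) + ⋯ + π_v(i)`, then with probability at
least `1 − C/q`: `Π_u(i) ⊄ Π_v(j)` and `Π_v(j) ⊄ Π_u(i)` for all `i, j < t`. -/
theorem stmt_7 (t n : ℕ) (ht : 1 ≤ t) (hn : 1 ≤ n)
    (d ku kv : ℕ → ℕ)
    (hdmono : ∀ j, j + 1 < t → d j < d (j + 1))
    (hdn : ∀ j, j < t → d j ≤ n)
    (hku0 : 1 ≤ ku 0) (hku0' : ku 0 < d 0)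
    (hkv0 : 1 ≤ kv 0) (hkv0' : kv 0 < d 0)
    (hku : ∀ j, 1 ≤ j → j < t → ku j ≤ d j - d (j - 1))
    (hkv : ∀ j, 1 ≤ j → j < t → kv j ≤ d j - d (j - 1)) :
    ∃ C : ℝ, ∀ (q : ℕ), IsPrimePow q →
      ∀ (F : Type) [Field F] [Fintype F], Fintype.card F = q →
      ∀ (P : ℕ → Submodule F (Fin n → F)),
        (∀ j, j + 1 < t → P j < P (j + 1)) →
        (∀ j, j < t → Module.finrank F ↥(P j) = d j) →
      1 - C / q ≤
        ((Finset.univ.filter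
            (fun ω : (j : Fin t) →
                ((Fin (ku j) → ↥(P j)) × (Fin (kv j) → ↥(P j))) =>
              ∀ i j : Fin t,
                ¬ (∑ a ∈ Finset.Iic i, Submodule.span F
                      (Set.range (fun b => ((ω a).1 b : Fin n → F))) ≤
                    ∑ a ∈ Finset.Iic j, Submodule.span F
                      (Set.range (fun b => ((ω a).2 b : Fin n → F)))) ∧
                ¬ (∑ a ∈ Finset.Iic j, Submodule.span F
                      (Set.range (fun b => ((ω a).2 b : Fin n → F))) ≤
                    ∑ a ∈ Finset.Iic i, Submodule.span F
                      (Set.range (fun b => ((ω a).1 b : Fin n → F)))))).card : ℝ)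
          / (Fintype.card ((j : Fin t) →
              ((Fin (ku j) → ↥(P j)) × (Fin (kv j) → ↥(P j)))) : ℝ) :=
  stmt_7_general t n ht d ku kv hku0 hku0' hkv0 hkv0' hku hkv
end

section
/- (Corollary 4 to Lemma 5.) Fix t ≥ 1, n ≥ 1, and integers m_a(1), …, m_a(t), m_b(1), …, m_b(t) with m_a(1) ≥ 1 and m_b(1) ≥ 1. There exists a constant C, depending only on these fixed parameters, such that for every prime power q the following holds. Let {Π_u(i)}_{i=0}^{t−1} and {Π_v(i)}_{i=0}^{t−1} be chains of subspaces of F_q^n with Π_u(0) ⊂ ⋯ ⊂ Π_u(t−1), Π_v(0) ⊂ ⋯ ⊂ Π_v(t−1), and Π_u(i) ⊄ Π_v(j) and Π_v(j) ⊄ Π_u(i) for all i, j ∈ {0, …, t−1}. For i = 1, …, t let π_a(i) be the span of m_a(i) vectors chosen independently and uniformly at random from Π_u(i−1) and π_b(i) the span of m_b(i) vectors chosen independently and uniformly at random from Π_v(i−1) (all samples mutually independent), and set Π_a(i) = π_a(1) + ⋯ + π_a(i) and Π_b(i) = π_b(1) + ⋯ + π_b(i). Then with probability at least 1 − C/q: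 Π_a(i) ⊄ Π_b(j) and Π_b(j) ⊄ Π_a(i) for all i, j ∈ {1, …, t}. -/
/-!
Only the first vector `x` sampled from `Π_u(0)` and the first vector `y` sampled from `Π_v(0)`
matter. The vector `x` lies in every `Π_a(i)`, while every `Π_b(j)` lies in `Π_v(t-1)`; so
`Π_a(i) ⊄ Π_b(j)` as soon as `x ∉ Π_v(t-1)`. Since `Π_u(0) ⊄ Π_v(t-1)`, the subspace
`Π_u(0) ∩ Π_v(t-1)` is proper in `Π_u(0)`, hence has index at least `q`, and a uniform `x`
falls into it with probability at most `1/q`. The same holds for `y` and `Π_u(t-1)`, so `C = 2`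
works.
-/

open scoped Classical

open Finset

section Counting

variable {Ω X Y : Type*} [Fintype Ω] [Fintype X] [Fintype Y]

theorem card_filter_fst_equiv_mul_card (e : Ω ≃ X × Y) (p : X → Prop) [DecidablePred p] :
    #{ω | p (e ω).1} * Fintype.card X = #{x | p x} * Fintype.card Ω := by
  have hfilter : #{ω | p (e ω).1} = #{z : X × Y | p z.1} :=
    card_equiv e fun ω => by simp
  rw [hfilter, ← univ_product_univ, filter_product_left, card_product, Fintype.card_congr e,
    Fintype.card_prod, card_univ]
  ring

theorem card_le_card_filter_add_card_filter_add_card_filter {P A B : Ω → Prop}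
    [DecidablePred P] [DecidablePred A] [DecidablePred B] (h : ∀ ω, ¬A ω → ¬B ω → P ω) :
    Fintype.card Ω ≤ #{ω | P ω} + #{ω | A ω} + #{ω | B ω} := by
  have hcover : univ ⊆ univ.filter P ∪ univ.filter A ∪ univ.filter B := by
    intro ω _
    have := h ω
    simp only [mem_union, mem_filter, mem_univ, true_and]
    tauto
  exact (card_le_card hcover).trans
    ((card_union_le _ _).trans (Nat.add_le_add_right (card_union_le _ _) _))

theorem one_sub_two_div_le_card_filter_div [Nonempty Ω] {P A B : Ω → Prop}
    [DecidablePred P] [DecidablePred A] [DecidablePred B] (h : ∀ ω, ¬A ω → ¬B ω → P ω)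
    {q : ℕ} (hq : 0 < q) (hA : #{ω | A ω} * q ≤ Fintype.card Ω)
    (hB : #{ω | B ω} * q ≤ Fintype.card Ω) :
    1 - 2 / (q : ℝ) ≤ #{ω | P ω} / Fintype.card Ω := by
  have hcover := card_le_card_filter_add_card_filter_add_card_filter h
  have hΩ : (0 : ℝ) < Fintype.card Ω := by exact_mod_cast Fintype.card_pos
  have hqR : (0 : ℝ) < q := by exact_mod_cast hq
  have hA' : (#{ω | A ω} : ℝ) ≤ Fintype.card Ω / q := by
    rw [le_div_iff₀ hqR]; exact_mod_cast hA
  have hB' : (#{ω | B ω} : ℝ) ≤ Fintype.card Ω / q := by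
    rw [le_div_iff₀ hqR]; exact_mod_cast hB
  have hcover' : (Fintype.card Ω : ℝ) ≤ #{ω | P ω} + #{ω | A ω} + #{ω | B ω} := by
    exact_mod_cast hcover
  rw [le_div_iff₀ hΩ]
  calc (1 - 2 / (q : ℝ)) * Fintype.card Ω
      = Fintype.card Ω - Fintype.card Ω / q - Fintype.card Ω / q := by ring
    _ ≤ #{ω | P ω} := by linarith

end Counting

section Subspaces

variable {F V : Type*} [Field F] [Fintype F] [AddCommGroup V] [Module F V]

theorem Submodule.card_mul_card_le_of_ne_top [Fintype V] {W : Submodule F V} [Fintype W]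
    (h : W ≠ ⊤) : Fintype.card F * Fintype.card W ≤ Fintype.card V := by
  rw [Module.card_eq_pow_finrank (K := F) (V := W), Module.card_eq_pow_finrank (K := F) (V := V),
    ← pow_succ']
  exact Nat.pow_le_pow_right Fintype.card_pos (Submodule.finrank_lt h)

theorem card_filter_mem_mul_card_le {T W : Submodule F V} [Fintype T] (h : ¬T ≤ W) :
    #{x : T | (x : V) ∈ W} * Fintype.card F ≤ Fintype.card T := by
  have hne : W.comap T.subtype ≠ ⊤ := fun htop => h fun x hx =>
    (Submodule.eq_top_iff'.1 htop) ⟨x, hx⟩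
  rw [← Fintype.card_subtype, mul_comm]
  exact Submodule.card_mul_card_le_of_ne_top hne

theorem card_filter_fst_equiv_mem_mul_card_le {Ω Y : Type*} [Fintype Ω] [Fintype Y]
    {T W : Submodule F V} [Fintype T] (e : Ω ≃ T × Y) (h : ¬T ≤ W) :
    #{ω | ((e ω).1 : V) ∈ W} * Fintype.card F ≤ Fintype.card Ω := by
  have hcount := card_filter_fst_equiv_mul_card e (fun x : T => (x : V) ∈ W)
  have hT := card_filter_mem_mul_card_le h
  refine Nat.le_of_mul_le_mul_right ?_ (Fintype.card_pos (α := T))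
  calc #{ω | ((e ω).1 : V) ∈ W} * Fintype.card F * Fintype.card T
      = #{x : T | (x : V) ∈ W} * Fintype.card F * Fintype.card Ω := by
        rw [mul_right_comm, hcount]; ring
    _ ≤ Fintype.card T * Fintype.card Ω := Nat.mul_le_mul_right _ hT
    _ = Fintype.card Ω * Fintype.card T := mul_comm _ _

end Subspaces

section Sums

variable {R M ι : Type*} {κ : ι → Type*} [Semiring R] [AddCommMonoid M] [Module R M]
  {s : Finset ι}

theorem sum_span_range_le {P : ι → Submodule R M} {W : Submodule R M} (v : ∀ a, κ a → P a)
    (h : ∀ a ∈ s, P a ≤ W) :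
    ∑ a ∈ s, Submodule.span R (Set.range fun b => (v a b : M)) ≤ W :=
  Finset.sum_induction _ (· ≤ W)
    (fun _ _ hS hT => (Submodule.add_eq_sup _ _).trans_le (sup_le hS hT)) bot_le
    fun a ha => Submodule.span_le.2 (Set.range_subset_iff.2 fun b => h a ha (v a b).2)

theorem mem_sum_span_range (v : ∀ a, κ a → M) {a : ι} (ha : a ∈ s) (b : κ a) :
    v a b ∈ ∑ a ∈ s, Submodule.span R (Set.range (v a)) :=
  single_le_sum_of_canonicallyOrdered (f := fun a => Submodule.span R (Set.range (v a))) ha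
    (Submodule.subset_span ⟨b, rfl⟩)

end Sums

theorem le_of_forall_le_succ_of_lt {α : Type*} [Preorder α] {P : ℕ → α} {t : ℕ}
    (hP : ∀ i, i + 1 < t → P i ≤ P (i + 1)) {i j : ℕ} (hij : i ≤ j) (hj : j < t) :
    P i ≤ P j := by
  induction hij with
  | refl => exact le_rfl
  | step _ ih => exact (ih (by omega)).trans (hP _ hj)

def Equiv.piProdFstSplitAt {ι : Type*} [DecidableEq ι] {κ : ι → Type*}
    [∀ i, DecidableEq (κ i)] {U W : ι → Type*} (i : ι) (k : κ i) :
    (∀ j, (κ j → U j) × W j) ≃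
      U i × (({l // l ≠ k} → U i) × (W i × ∀ j : {j // j ≠ i}, (κ j → U j) × W j)) :=
  (Equiv.piSplitAt i _).trans <|
    (((Equiv.piSplitAt k _).prodCongr (Equiv.refl _)).prodCongr (Equiv.refl _)).trans <|
      (Equiv.prodAssoc _ _ _).trans (Equiv.prodAssoc _ _ _)

theorem stmt_8_general (t n : ℕ) (ht : 1 ≤ t)
    (ma mb : ℕ → ℕ) (hma0 : 1 ≤ ma 0) (hmb0 : 1 ≤ mb 0) :
    ∃ C : ℝ, ∀ (q : ℕ), IsPrimePow q →
      ∀ (F : Type) [Field F] [Fintype F], Fintype.card F = q →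
      ∀ (Pu Pv : ℕ → Submodule F (Fin n → F)),
        (∀ i, i + 1 < t → Pu i < Pu (i + 1)) →
        (∀ i, i + 1 < t → Pv i < Pv (i + 1)) →
        (∀ i j, i < t → j < t → ¬ (Pu i ≤ Pv j) ∧ ¬ (Pv j ≤ Pu i)) →
      1 - C / q ≤
        ((Finset.univ.filter
            (fun ω : (i : Fin t) →
                ((Fin (ma i) → ↥(Pu i)) × (Fin (mb i) → ↥(Pv i))) =>
              ∀ i j : Fin t,
                ¬ (∑ a ∈ Finset.Iic i, Submodule.span F
                      (Set.range (fun b => ((ω a).1 b : Fin n → F))) ≤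
                    ∑ a ∈ Finset.Iic j, Submodule.span F
                      (Set.range (fun b => ((ω a).2 b : Fin n → F)))) ∧
                ¬ (∑ a ∈ Finset.Iic j, Submodule.span F
                      (Set.range (fun b => ((ω a).2 b : Fin n → F))) ≤
                    ∑ a ∈ Finset.Iic i, Submodule.span F
                      (Set.range (fun b => ((ω a).1 b : Fin n → F)))))).card : ℝ)
          / (Fintype.card ((i : Fin t) →
              ((Fin (ma i) → ↥(Pu i)) × (Fin (mb i) → ↥(Pv i)))) : ℝ) := by
  refine ⟨2, fun q hq F _ _ hF Pu Pv hPu hPv hcross => ?_⟩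
  have hlast : t - 1 < t := by omega
  let i0 : Fin t := ⟨0, ht⟩
  let b0 : Fin (ma i0) := ⟨0, hma0⟩
  let c0 : Fin (mb i0) := ⟨0, hmb0⟩
  -- the first vector of each first sample is split off as a uniformly distributed coordinate
  have hx := card_filter_fst_equiv_mem_mul_card_le
    (Equiv.piProdFstSplitAt (κ := fun i : Fin t => Fin (ma i)) (U := fun i => Pu i)
      (W := fun i => Fin (mb i) → Pv i) i0 b0)
    (hcross 0 (t - 1) ht hlast).1
  have hy := card_filter_fst_equiv_mem_mul_card_le
    ((Equiv.piCongrRight fun _ => Equiv.prodComm _ _).trans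
      (Equiv.piProdFstSplitAt (κ := fun i : Fin t => Fin (mb i)) (U := fun i => Pv i)
        (W := fun i => Fin (ma i) → Pu i) i0 c0))
    (hcross (t - 1) 0 hlast ht).2
  rw [hF] at hx hy
  refine one_sub_two_div_le_card_filter_div
    (fun ω hxv hyu i j => ⟨fun hle => hxv ?_, fun hle => hyu ?_⟩) hq.pos hx hy
  · exact sum_span_range_le (fun a b => (ω a).2 b)
      (fun a _ => le_of_forall_le_succ_of_lt (fun i hi => (hPv i hi).le) (by omega) hlast)
      (hle (mem_sum_span_range (fun a b => ((ω a).1 b : Fin n → F))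
        (mem_Iic.2 (Nat.zero_le i)) b0))
  · exact sum_span_range_le (fun a b => (ω a).1 b)
      (fun a _ => le_of_forall_le_succ_of_lt (fun i hi => (hPu i hi).le) (by omega) hlast)
      (hle (mem_sum_span_range (fun a b => ((ω a).2 b : Fin n → F))
        (mem_Iic.2 (Nat.zero_le j)) c0))

/-- Corollary 4 to Lemma 5. Chains and samples are 0-indexed: `Pu i`, `Pv i`
are the paper's `Π_u(i)`, `Π_v(i)` (for `i < t`), the sample at index `i` (drawn from
`Pu i`, resp. `Pv i`) is the paper's `π_a(i+1)`, resp. `π_b(i+1)`, and `ma i`, `mb i` are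
the paper's `m_a(i+1)`, `m_b(i+1)`. For fixed `t, n, ma, mb` (with `ma 0, mb 0 ≥ 1`) there
is a constant `C` such that for every prime power `q` and all chains
`Pu 0 ⊂ ⋯ ⊂ Pu (t−1)` and `Pv 0 ⊂ ⋯ ⊂ Pv (t−1)` of subspaces of `F_q^n` with
`Pu i ⊄ Pv j` and `Pv j ⊄ Pu i` for all `i, j < t`: if `π_a(i)` is the span of `ma i`
uniformly random vectors of `Pu i` and `π_b(i)` the span of `mb i` uniformly random
vectors of `Pv i` (all independent), and `Π_a(i) = π_a(0) + ⋯ + π_a(i)`,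
`Π_b(i) = π_b(0) + ⋯ + π_b(i)`, then with probability at least `1 − C/q`:
`Π_a(i) ⊄ Π_b(j)` and `Π_b(j) ⊄ Π_a(i)` for all `i, j < t`. -/
theorem stmt_8 (t n : ℕ) (ht : 1 ≤ t) (hn : 1 ≤ n)
    (ma mb : ℕ → ℕ) (hma0 : 1 ≤ ma 0) (hmb0 : 1 ≤ mb 0) :
    ∃ C : ℝ, ∀ (q : ℕ), IsPrimePow q →
      ∀ (F : Type) [Field F] [Fintype F], Fintype.card F = q →
      ∀ (Pu Pv : ℕ → Submodule F (Fin n → F)),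
        (∀ i, i + 1 < t → Pu i < Pu (i + 1)) →
        (∀ i, i + 1 < t → Pv i < Pv (i + 1)) →
        (∀ i j, i < t → j < t → ¬ (Pu i ≤ Pv j) ∧ ¬ (Pv j ≤ Pu i)) →
      1 - C / q ≤
        ((Finset.univ.filter
            (fun ω : (i : Fin t) →
                ((Fin (ma i) → ↥(Pu i)) × (Fin (mb i) → ↥(Pv i))) =>
              ∀ i j : Fin t,
                ¬ (∑ a ∈ Finset.Iic i, Submodule.span F
                      (Set.range (fun b => ((ω a).1 b : Fin n → F))) ≤
                    ∑ a ∈ Finset.Iic j, Submodule.span F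
                      (Set.range (fun b => ((ω a).2 b : Fin n → F)))) ∧
                ¬ (∑ a ∈ Finset.Iic j, Submodule.span F
                      (Set.range (fun b => ((ω a).2 b : Fin n → F))) ≤
                    ∑ a ∈ Finset.Iic i, Submodule.span F
                      (Set.range (fun b => ((ω a).1 b : Fin n → F)))))).card : ℝ)
          / (Fintype.card ((i : Fin t) →
              ((Fin (ma i) → ↥(Pu i)) × (Fin (mb i) → ↥(Pv i)))) : ℝ) :=
  stmt_8_general t n ht ma mb hma0 hmb0
end

section
/- (Key claim in the proof of Lemma 5.) Fix t ≥ 1, n ≥ 1, dimensions d_0 < d_1 < ⋯ < d_{t−1} ≤ n, and integers k_v(1), …, k_v(t) with 1 ≤ k_v(1) ≤ d_0 and k_v(j) ≤ d_{j−1} − d_{j−2} for j = 2, …, t. There exists a constant C, depending only on these fixed parameters, such that for every prime power q and every chain of subspaces Π(0) ⊂ ⋯ ⊂ Π(t−1) of F_q^n with dim(Π(j)) = d_j, the following holds. For j = 1, …, t let π_v(j) be the span of k_v(j) vectors chosen independently and uniformly at random from Π(j−1), and set Π_v(i) = π_v(1) + ⋯ + π_v(i). Then with probability at least 1 − C/q: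 Π(0) ∩ Π_v(k) = π_v(1) for every k ∈ {1, …, t}. -/
open scoped Classical

/-!
Call a sample bad if, for some `j ≥ 1`, the span of the `j`-th batch meets `P (j - 1)`
nontrivially. The modular law gives `P 0 ⊓ (X ⊔ π) = P 0 ⊓ X` whenever `X ≤ P (j - 1)` and
`π ⊓ P (j - 1) = ⊥`; so for a good sample, by induction on `k`, the intersection of `P 0` with the
span of the batches `0, …, k` stays equal to the span of batch `0`.

If `k` uniform vectors of `S` span a subspace meeting `Q`, some vector lies in `Q` plus the span of
the others. When `dim Q + k ≤ dim S` that is a proper subspace of `S` not depending on the vector,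
so it is hit with probability at most `1/q`. Hence each batch is bad with probability at most
`k_v(j)/q`, and a union bound gives the constant `C = ∑ k_v(j)`.
-/

open Finset Module Submodule

section Density

variable {ι : Type*} [Fintype ι] [DecidableEq ι] {A : ι → Type*} [∀ i, Fintype (A i)]

theorem dens_filter_le_of_forall_update_le (p : (∀ i, A i) → Prop) [DecidablePred p] (x : ι)
    {ε : ℚ≥0} (h : ∀ ω, (univ.filter fun a => p (Function.update ω x a)).dens ≤ ε) :
    (univ.filter p).dens ≤ ε := by
  rcases isEmpty_or_nonempty (A x) with hA | hA
  · have : IsEmpty (∀ i, A i) := ⟨fun ω => hA.false (ω x)⟩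
    simp
  let e : (∀ i, A i) × A x ≃ (∀ i, A i) × A x :=
    Function.Involutive.toPerm (fun z => (Function.update z.1 x z.2, z.1 x)) (by intro z; simp)
  have hcount : #(univ.filter p) * Fintype.card (A x)
      = ∑ ω, #(univ.filter fun a => p (Function.update ω x a)) := by
    calc #(univ.filter p) * Fintype.card (A x)
        = #(univ.filter fun z : (∀ i, A i) × A x => p (Function.update z.1 x z.2)) := by
          rw [← card_univ (α := A x), ← card_product, ← univ_product_univ, ← filter_product_left]
          exact (card_equiv e (by simp [e]; intros; rfl)).symm
      _ = ∑ ω, #(univ.filter fun a => p (Function.update ω x a)) := by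
          simp only [card_filter, Fintype.sum_prod_type]
  have hcard : 0 < (Fintype.card (A x) : ℚ≥0) := by exact_mod_cast Fintype.card_pos
  refine div_le_of_le_mul₀ zero_le zero_le (le_of_mul_le_mul_right ?_ hcard)
  calc (#(univ.filter p) : ℚ≥0) * Fintype.card (A x)
      = ∑ ω, (univ.filter fun a => p (Function.update ω x a)).dens * Fintype.card (A x) := by
        simp only [dens_mul_card]; exact_mod_cast hcount
    _ ≤ ∑ _ω : ∀ i, A i, ε * Fintype.card (A x) := by gcongr with ω; exact h ω
    _ = ε * Fintype.card (∀ i, A i) * Fintype.card (A x) := by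
        rw [sum_const, card_univ, nsmul_eq_mul]; ring

theorem dens_filter_eval_le (x : ι) (p : A x → Prop) [DecidablePred p] :
    (univ.filter fun ω : ∀ i, A i => p (ω x)).dens ≤ (univ.filter p).dens :=
  dens_filter_le_of_forall_update_le _ x fun ω => by simp only [Function.update_self, le_rfl]

end Density

theorem one_sub_le_card_filter_div_card {α : Type*} [Fintype α] [Nonempty α] {p : α → Prop}
    [DecidablePred p] {s : Finset α} {ε : ℝ} (hp : ∀ a ∉ s, p a) (hs : (s.dens : ℝ) ≤ ε) :
    1 - ε ≤ (#(univ.filter p) : ℝ) / Fintype.card α := by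
  have hcover : univ ⊆ univ.filter p ∪ s := fun a _ => by
    by_cases ha : a ∈ s <;> simp [ha, hp]
  have h := (dens_le_dens hcover).trans (dens_union_le _ s)
  rw [dens_univ] at h
  have h' : (1 : ℝ) ≤ (univ.filter p).dens + s.dens := by exact_mod_cast h
  rw [dens, NNRat.cast_div, NNRat.cast_natCast, NNRat.cast_natCast] at h'
  linarith

theorem Submodule.disjoint_span_range_of_forall_notMem_sup_span {K V ι : Type*} [DivisionRing K]
    [AddCommGroup V] [Module K V] {Q : Submodule K V} {v : ι → V}
    (h : ∀ i, v i ∉ Q ⊔ span K (v '' (Set.univ \ {i}))) :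
    Disjoint (span K (Set.range v)) Q := by
  have hli : LinearIndependent K (Q.mkQ ∘ v) := by
    refine linearIndependent_iff_notMem_span.mpr fun i hi => h i ?_
    rw [Set.image_comp, ← Submodule.map_span] at hi
    rw [← Submodule.comap_map_mkQ]
    exact hi
  simpa using Submodule.range_ker_disjoint hli

theorem Submodule.finset_sum_eq_sup {R M ι : Type*} [Semiring R] [AddCommMonoid M] [Module R M]
    (s : Finset ι) (f : ι → Submodule R M) : ∑ i ∈ s, f i = s.sup f :=
  rfl

section FiniteField

variable {F V : Type*} [Field F] [Fintype F] [AddCommGroup V] [Module F V] [Fintype V]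

theorem dens_filter_coe_mem_le_inv_card {S M : Submodule F V} (h : finrank F M < finrank F S) :
    (univ.filter fun a : S => (a : V) ∈ M).dens ≤ (Fintype.card F : ℚ≥0)⁻¹ := by
  obtain ⟨r, hr⟩ : ∃ r, finrank F S = r + 1 := ⟨_, (Nat.succ_pred_eq_of_pos (by omega)).symm⟩
  have hcount : #(univ.filter fun a : S => (a : V) ∈ M) ≤ Fintype.card F ^ r :=
    calc #(univ.filter fun a : S => (a : V) ∈ M)
        = Fintype.card {a : S // (a : V) ∈ M} := (Fintype.card_subtype _).symm
      _ ≤ Fintype.card M := Fintype.card_le_of_injective (fun a => ⟨a.1, a.2⟩)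
          fun a b hab => Subtype.ext (Subtype.ext (congrArg (fun c : M => (c : V)) hab))
      _ = Fintype.card F ^ finrank F M := Module.card_eq_pow_finrank
      _ ≤ Fintype.card F ^ r := Nat.pow_le_pow_right Fintype.card_pos (by omega)
  rw [dens, Module.card_eq_pow_finrank (K := F) (V := S), hr, div_le_iff₀ (by positivity)]
  calc (#(univ.filter fun a : S => (a : V) ∈ M) : ℚ≥0) ≤ (Fintype.card F : ℚ≥0) ^ r := by
        exact_mod_cast hcount
    _ = (Fintype.card F : ℚ≥0)⁻¹ * ((Fintype.card F : ℕ) ^ (r + 1) : ℕ) := by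
        push_cast; field_simp; ring

theorem dens_filter_not_disjoint_span_le {ι : Type*} [Fintype ι] [DecidableEq ι]
    {S Q : Submodule F V} (h : finrank F Q + Fintype.card ι ≤ finrank F S) :
    (univ.filter fun w : ι → S => ¬Disjoint (span F (Set.range fun i => (w i : V))) Q).dens
      ≤ Fintype.card ι / Fintype.card F := by
  set M : ι → (ι → S) → Submodule F V :=
    fun i w => Q ⊔ span F ((fun j => (w j : V)) '' (Set.univ \ {i}))
  have hM_update : ∀ i w a, M i (Function.update w i a) = M i w := by
    intro i w a
    simp only [M]
    congr 2
    refine Set.image_congr fun j hj => ?_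
    rw [Function.update_of_ne (by simpa using hj)]
  have hM_rank : ∀ i w, finrank F (M i w) < finrank F S := by
    intro i w
    have hspan : finrank F (span F ((fun j => (w j : V)) '' (Set.univ \ {i})))
        ≤ Fintype.card ι - 1 := by
      refine (finrank_span_le_card _).trans ?_
      simpa [card_sdiff] using card_image_le (s := univ \ {i}) (f := fun j => (w j : V))
    have := Submodule.finrank_add_le_finrank_add_finrank Q
      (span F ((fun j => (w j : V)) '' (Set.univ \ {i})))
    have : 0 < Fintype.card ι := Fintype.card_pos_iff.mpr ⟨i⟩
    simp only [M]
    omega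
  calc _ ≤ (univ.biUnion fun i => univ.filter fun w : ι → S => (w i : V) ∈ M i w).dens := by
        refine dens_le_dens fun w hw => ?_
        simp only [mem_filter, mem_univ, true_and, mem_biUnion] at hw ⊢
        by_contra! hdisj
        exact hw (Submodule.disjoint_span_range_of_forall_notMem_sup_span hdisj)
    _ ≤ ∑ i, (univ.filter fun w : ι → S => (w i : V) ∈ M i w).dens := dens_biUnion_le
    _ ≤ ∑ _i : ι, (Fintype.card F : ℚ≥0)⁻¹ := by
        gcongr with i
        refine dens_filter_le_of_forall_update_le _ i fun w => ?_
        simp only [Function.update_self, hM_update]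
        exact dens_filter_coe_mem_le_inv_card (hM_rank i w)
    _ = Fintype.card ι / Fintype.card F := by simp [div_eq_mul_inv]

theorem dens_filter_exists_not_disjoint_span_le {κ : Type*} [Fintype κ] [DecidableEq κ]
    {ι : κ → Type*} [∀ j, Fintype (ι j)] [∀ j, DecidableEq (ι j)] {S Q : κ → Submodule F V}
    (s : Finset κ) (h : ∀ j ∈ s, finrank F (Q j) + Fintype.card (ι j) ≤ finrank F (S j)) :
    (univ.filter fun ω : ∀ j, ι j → S j =>
        ∃ j ∈ s, ¬Disjoint (span F (Set.range fun b => (ω j b : V))) (Q j)).dens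
      ≤ (∑ j ∈ s, (Fintype.card (ι j) : ℚ≥0)) / Fintype.card F := by
  calc _ ≤ (s.biUnion fun j => univ.filter fun ω : ∀ j, ι j → S j =>
          ¬Disjoint (span F (Set.range fun b => (ω j b : V))) (Q j)).dens :=
        dens_le_dens fun ω => by simp
    _ ≤ ∑ j ∈ s, (univ.filter fun ω : ∀ j, ι j → S j =>
          ¬Disjoint (span F (Set.range fun b => (ω j b : V))) (Q j)).dens := dens_biUnion_le
    _ ≤ ∑ j ∈ s, (Fintype.card (ι j) : ℚ≥0) / Fintype.card F :=
        sum_le_sum fun j hj => (dens_filter_eval_le (A := fun j => ι j → S j) j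
          fun w => ¬Disjoint (span F (Set.range fun b => (w b : V))) (Q j)).trans
          (dens_filter_not_disjoint_span_le (h j hj))
    _ = _ := (sum_div ..).symm

end FiniteField

theorem Fin.sup_Iic_eq_partialSups {α : Type*} [SemilatticeSup α] [OrderBot α] {t : ℕ}
    (f : Fin t → α) (k : Fin t) :
    (Iic k).sup f = partialSups (fun a : ℕ => if h : a < t then f ⟨a, h⟩ else ⊥) k := by
  rw [partialSups_apply, sup'_eq_sup, ← Fin.map_valEmbedding_Iic, sup_map]
  exact sup_congr rfl fun a _ => by simp

section ModularLattice

variable {α : Type*} [Lattice α] [OrderBot α] [IsModularLattice α]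

theorem inf_sup_eq_inf_of_disjoint {a b x s : α} (ha : a ≤ b) (hx : x ≤ b) (hs : Disjoint s b) :
    a ⊓ (x ⊔ s) = a ⊓ x := by
  calc a ⊓ (x ⊔ s) = a ⊓ ((x ⊔ s) ⊓ b) := by rw [inf_comm _ b, ← inf_assoc, inf_of_le_left ha]
    _ = a ⊓ x := by rw [sup_inf_assoc_of_le s hx, hs.eq_bot, sup_bot_eq]

theorem inf_partialSups_eq_of_disjoint {P π : ℕ → α} {m : ℕ} (hP : MonotoneOn P (Set.Iic m))
    (hπ : ∀ a ≤ m, π a ≤ P a) (hdisj : ∀ a < m, Disjoint (π (a + 1)) (P a)) :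
    P 0 ⊓ partialSups π m = π 0 := by
  induction m with
  | zero => rw [partialSups_zero]; exact inf_eq_right.2 (hπ 0 le_rfl)
  | succ m ih =>
    have hle : ∀ a ≤ m, P a ≤ P m := fun a ha => hP (by simp; omega) (by simp) ha
    have hsups : partialSups π m ≤ P m :=
      partialSups_le _ _ _ fun a ha => (hπ a (by omega)).trans (hle a ha)
    rw [← Order.succ_eq_add_one, partialSups_succ, Order.succ_eq_add_one,
      inf_sup_eq_inf_of_disjoint (hle 0 m.zero_le) hsups (hdisj m m.lt_add_one)]
    exact ih (hP.mono (Set.Iic_subset_Iic.2 m.le_succ)) (fun a ha => hπ a (by omega))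
      fun a ha => hdisj a (by omega)

theorem inf_sup_Iic_eq_of_disjoint {t : ℕ} {P : ℕ → α} {π : Fin t → α}
    (hP : MonotoneOn P (Set.Iio t)) (hπ : ∀ a, π a ≤ P a)
    (hdisj : ∀ a : Fin t, (a : ℕ) ≠ 0 → Disjoint (π a) (P (a - 1))) (k : Fin t) :
    P 0 ⊓ (Iic k).sup π = π ⟨0, k.pos⟩ := by
  rw [Fin.sup_Iic_eq_partialSups]
  refine (inf_partialSups_eq_of_disjoint (hP.mono (Set.Iic_subset_Iio.2 k.2)) ?_ ?_).trans
    (dif_pos k.pos)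
  · intro a _
    split_ifs with h
    · exact hπ ⟨a, h⟩
    · exact bot_le
  · intro a ha
    rw [dif_pos (by omega)]
    exact hdisj ⟨a + 1, by omega⟩ a.succ_ne_zero

end ModularLattice

theorem stmt_9_general (t n : ℕ) (ht : 0 < t)
    (d kv : ℕ → ℕ)
    (hkv : ∀ j, 1 ≤ j → j < t → kv j ≤ d j - d (j - 1)) :
    ∃ C : ℝ, ∀ (q : ℕ), IsPrimePow q →
      ∀ (F : Type) [Field F] [Fintype F], Fintype.card F = q →
      ∀ (P : ℕ → Submodule F (Fin n → F)),
        (∀ j, j + 1 < t → P j < P (j + 1)) →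
        (∀ j, j < t → Module.finrank F ↥(P j) = d j) →
      1 - C / q ≤
        ((Finset.univ.filter
            (fun ω : (j : Fin t) → (Fin (kv j) → ↥(P j)) =>
              ∀ k : Fin t,
                P 0 ⊓ (∑ a ∈ Finset.Iic k, Submodule.span F
                    (Set.range (fun b => (ω a b : Fin n → F))))
                  = Submodule.span F
                      (Set.range (fun b => (ω (⟨0, ht⟩ : Fin t) b : Fin n → F))))).card : ℝ)
          / (Fintype.card ((j : Fin t) → (Fin (kv j) → ↥(P j))) : ℝ) := by
  refine ⟨∑ j ∈ range t, (kv j : ℝ), fun q _ F _ _ hF P hPlt hPd => ?_⟩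
  have hPmono : MonotoneOn P (Set.Iio t) :=
    monotoneOn_of_le_succ Set.ordConnected_Iio fun a _ _ ha => (hPlt a ha).le
  have hrank : ∀ j ∈ univ.filter fun j : Fin t => (j : ℕ) ≠ 0,
      finrank F (P (j - 1)) + Fintype.card (Fin (kv j)) ≤ finrank F (P j) := by
    intro j hj
    have hj : 0 < (j : ℕ) := Nat.pos_of_ne_zero (mem_filter.1 hj).2
    have hmono := Submodule.finrank_mono (hPlt (j - 1) (by omega)).le
    rw [Nat.sub_add_cancel hj, hPd _ j.2, hPd _ (by omega)] at hmono
    rw [Fintype.card_fin, hPd _ j.2, hPd _ (by omega)]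
    have := hkv j hj j.2
    omega
  have hbad := NNRat.cast_le (K := ℝ) |>.2 <| dens_filter_exists_not_disjoint_span_le
    (S := fun j : Fin t => P j) (Q := fun j : Fin t => P (j - 1)) _ hrank
  simp only [NNRat.cast_div, NNRat.cast_sum, NNRat.cast_natCast, Fintype.card_fin, hF] at hbad
  refine one_sub_le_card_filter_div_card (fun ω hω k => ?_) (hbad.trans ?_)
  · simp only [mem_filter, mem_univ, true_and, not_exists, not_and, not_not] at hω
    rw [Submodule.finset_sum_eq_sup]
    exact inf_sup_Iic_eq_of_disjoint hPmono
      (fun a => span_le.2 (Set.range_subset_iff.2 fun b => (ω a b).2))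
      (fun a ha => hω a (by simpa using ha)) k
  · rw [← Fin.sum_univ_eq_sum_range (fun j => (kv j : ℝ))]
    gcongr
    exact filter_subset _ _

/-- key claim in the proof of Lemma 5. Subspaces and samples are 0-indexed:
`P j` is the paper's `Π(j)` (for `j < t`), the sample at index `j` (drawn from `P j`) is
the paper's `π_v(j+1)`, and `kv j` is the paper's `k_v(j+1)`. For fixed parameters there
is a constant `C` such that for every prime power `q` and every chain
`P 0 ⊂ ⋯ ⊂ P (t−1)` of subspaces of `F_q^n` with `dim (P j) = d j`, if `π_v(j)` is the
span of `kv j` uniformly random vectors of `P j` (all independent) and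
`Π_v(i) = π_v(0) + ⋯ + π_v(i)`, then with probability at least `1 − C/q`:
`P 0 ⊓ Π_v(k) = π_v(0)` for every `k < t`. -/
theorem stmt_9 (t n : ℕ) (ht : 0 < t) (hn : 1 ≤ n)
    (d kv : ℕ → ℕ)
    (hdmono : ∀ j, j + 1 < t → d j < d (j + 1))
    (hdn : ∀ j, j < t → d j ≤ n)
    (hkv0 : 1 ≤ kv 0) (hkv0' : kv 0 ≤ d 0)
    (hkv : ∀ j, 1 ≤ j → j < t → kv j ≤ d j - d (j - 1)) :
    ∃ C : ℝ, ∀ (q : ℕ), IsPrimePow q →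
      ∀ (F : Type) [Field F] [Fintype F], Fintype.card F = q →
      ∀ (P : ℕ → Submodule F (Fin n → F)),
        (∀ j, j + 1 < t → P j < P (j + 1)) →
        (∀ j, j < t → Module.finrank F ↥(P j) = d j) →
      1 - C / q ≤
        ((Finset.univ.filter
            (fun ω : (j : Fin t) → (Fin (kv j) → ↥(P j)) =>
              ∀ k : Fin t,
                P 0 ⊓ (∑ a ∈ Finset.Iic k, Submodule.span F
                    (Set.range (fun b => (ω a b : Fin n → F))))
                  = Submodule.span F
                      (Set.range (fun b => (ω (⟨0, ht⟩ : Fin t) b : Fin n → F))))).card : ℝ)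
          / (Fintype.card ((j : Fin t) → (Fin (kv j) → ↥(P j))) : ℝ) :=
  stmt_9_general t n ht d kv hkv
end

section
/- The average pairwise subspace distance D_S satisfies the triangle inequality: for any nonempty finite sets A, B, C of subspaces of a finite-dimensional vector space V over a field, D_S(A, C) ≤ D_S(A, B) + D_S(B, C). -/
/-- The subspace distance `d_S(Π₁, Π₂) = dim(Π₁ + Π₂) − dim(Π₁ ∩ Π₂)` (as an integer). -/
noncomputable def subspaceDist {K V : Type} [Field K] [AddCommGroup V] [Module K V]
    (S₁ S₂ : Submodule K V) : ℤ :=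
  (Module.finrank K ↥(S₁ ⊔ S₂) : ℤ) - (Module.finrank K ↥(S₁ ⊓ S₂) : ℤ)

/-- The average pairwise subspace distance
`D_S(A,B) = (1/(|A||B|)) Σ_{π_a ∈ A, π_b ∈ B} d_S(π_a, π_b)`. -/
noncomputable def avgSubspaceDist {K V : Type} [Field K] [AddCommGroup V] [Module K V]
    (A B : Finset (Submodule K V)) : ℝ :=
  (∑ a ∈ A, ∑ b ∈ B, (subspaceDist a b : ℝ)) / ((A.card : ℝ) * (B.card : ℝ))

/-! Since `d_S(a, c) = dim a + dim c - 2 dim (a ⊓ c)`, the triangle inequality for `d_S` is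
`dim (a ⊓ b) + dim (b ⊓ c) ≤ dim b + dim (a ⊓ c)`, which is modularity of `finrank` applied to
`a ⊓ b` and `b ⊓ c`. Summing `d a c ≤ d a b + d b c` over all triples and dividing by
`|A||B||C|` then gives the triangle inequality for the averages. -/

open Finset Module

section Averaging

variable {α : Type*} {d : α → α → ℝ}

theorem card_mul_sum_sum_le (hd : ∀ a b c, d a c ≤ d a b + d b c) (A B C : Finset α) :
    #B * ∑ a ∈ A, ∑ c ∈ C, d a c ≤
      #C * ∑ a ∈ A, ∑ b ∈ B, d a b + #A * ∑ b ∈ B, ∑ c ∈ C, d b c := by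
  calc (#B : ℝ) * ∑ a ∈ A, ∑ c ∈ C, d a c = ∑ a ∈ A, ∑ c ∈ C, ∑ b ∈ B, d a c := by
        simp only [sum_const, nsmul_eq_mul, mul_sum]
    _ ≤ ∑ a ∈ A, ∑ c ∈ C, ∑ b ∈ B, (d a b + d b c) :=
        sum_le_sum fun a _ ↦ sum_le_sum fun c _ ↦ sum_le_sum fun b _ ↦ hd a b c
    _ = #C * ∑ a ∈ A, ∑ b ∈ B, d a b + #A * ∑ b ∈ B, ∑ c ∈ C, d b c := by
        simp only [sum_add_distrib, sum_comm (s := C) (t := B), sum_comm (s := A) (t := B),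
          sum_const, nsmul_eq_mul, mul_sum]

theorem avg_triangle (hd : ∀ a b c, d a c ≤ d a b + d b c) {A B C : Finset α}
    (hA : A.Nonempty) (hB : B.Nonempty) (hC : C.Nonempty) :
    (∑ a ∈ A, ∑ c ∈ C, d a c) / (#A * #C) ≤
      (∑ a ∈ A, ∑ b ∈ B, d a b) / (#A * #B) + (∑ b ∈ B, ∑ c ∈ C, d b c) / (#B * #C) := by
  have hA₀ : (0 : ℝ) < #A := by exact_mod_cast hA.card_pos
  have hB₀ : (0 : ℝ) < #B := by exact_mod_cast hB.card_pos
  have hC₀ : (0 : ℝ) < #C := by exact_mod_cast hC.card_pos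
  rw [div_add_div _ _ (by positivity) (by positivity),
    div_le_div_iff₀ (by positivity) (by positivity)]
  linear_combination (#A * #B * #C : ℝ) * card_mul_sum_sum_le hd A B C

end Averaging

section SubspaceDist

variable {K V : Type} [Field K] [AddCommGroup V] [Module K V] [FiniteDimensional K V]

theorem subspaceDist_eq (S₁ S₂ : Submodule K V) :
    subspaceDist S₁ S₂ =
      (finrank K S₁ : ℤ) + finrank K S₂ - 2 * finrank K ↥(S₁ ⊓ S₂) := by
  have := Submodule.finrank_sup_add_finrank_inf_eq S₁ S₂
  unfold subspaceDist
  omega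

theorem finrank_inf_add_finrank_inf_le (a b c : Submodule K V) :
    finrank K ↥(a ⊓ b) + finrank K ↥(b ⊓ c) ≤ finrank K b + finrank K ↥(a ⊓ c) := by
  have hsup : finrank K ↥(a ⊓ b ⊔ b ⊓ c) ≤ finrank K b :=
    Submodule.finrank_mono (sup_le inf_le_right inf_le_left)
  have hinf : finrank K ↥(a ⊓ b ⊓ (b ⊓ c)) ≤ finrank K ↥(a ⊓ c) :=
    Submodule.finrank_mono (inf_le_inf inf_le_left inf_le_right)
  have := Submodule.finrank_sup_add_finrank_inf_eq (a ⊓ b) (b ⊓ c)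
  omega

theorem subspaceDist_triangle (a b c : Submodule K V) :
    subspaceDist a c ≤ subspaceDist a b + subspaceDist b c := by
  rw [subspaceDist_eq, subspaceDist_eq, subspaceDist_eq]
  have := finrank_inf_add_finrank_inf_le a b c
  omega

end SubspaceDist

/-- the average pairwise subspace distance `D_S` satisfies the triangle
inequality: for nonempty finite sets `A, B, C` of subspaces of a finite-dimensional
vector space, `D_S(A, C) ≤ D_S(A, B) + D_S(B, C)`. -/
theorem stmt_11 (K V : Type) [Field K] [AddCommGroup V] [Module K V]
    [FiniteDimensional K V] (A B C : Finset (Submodule K V))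
    (hA : A.Nonempty) (hB : B.Nonempty) (hC : C.Nonempty) :
    avgSubspaceDist A C ≤ avgSubspaceDist A B + avgSubspaceDist B C :=
  avg_triangle (fun a b c ↦ by exact_mod_cast subspaceDist_triangle a b c) hA hB hC
end

section
/- (Asymptotic rank distribution, claimed in the proof of Lemma 1.) Fix integers n ≥ 1, m ≥ 1 and 0 ≤ k ≤ min(m,n). There exists a constant C, depending only on n, m and k, such that for every prime power q the following holds: if Π is the span of m vectors chosen independently and uniformly at random from F_q^n, then | q^{(m−k)(n−k)} · Prob[dim(Π) = k] − 1 | ≤ C/q; i.e., Prob[dim(Π) = k] = q^{−(m−k)(n−k)} (1 − O(q^{−1})). -/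
/-!
Sending a tuple of vectors to its span fibres the `m`-tuples of rank `k` in `F^n` over the
`k`-dimensional subspaces `W`, each fibre being the `m`-tuples spanning `W ≃ F^k`. Doing the same
for `k`-tuples, where rank `k` means linear independence, and dividing eliminates the unknown
number of subspaces: the number `N` of rank-`k` tuples satisfies
`N · |GL_k(F_q)| = #{independent k-tuples in F_q^n} · #{independent k-tuples in F_q^m}`,
the last factor by transposing `m × k` matrices. Each of these three products is
`q^(jk) ∏_{i<k} (1 - q^(i-j))` with the product in `[(1 - 1/q)^k, 1]`, so the normalised count
is a ratio of three such products, hence `1 + O(1/q)`.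
-/

open Module Submodule Set

section Spanning

variable {F V V' ι : Type*} [Field F] [AddCommGroup V] [Module F V] [AddCommGroup V']
  [Module F V']

theorem Submodule.span_range_coe_eq_iff (W : Submodule F V) (w : ι → W) :
    span F (range fun i => (w i : V)) = W ↔ span F (range w) = ⊤ := by
  rw [show (range fun i => (w i : V)) = W.subtype '' range w from range_comp _ _, span_image,
    ← (map_injective_of_injective W.injective_subtype).eq_iff, map_subtype_top]

theorem LinearEquiv.span_range_comp_eq_top_iff (e : V ≃ₗ[F] V') (w : ι → V) :
    span F (range (e ∘ w)) = ⊤ ↔ span F (range w) = ⊤ := by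
  rw [Set.range_comp, ← e.coe_toLinearMap, span_image, Submodule.map_eq_top_iff]

def Submodule.spanRangeEqEquiv (W : Submodule F V) :
    {v : ι → V // span F (range v) = W} ≃ {w : ι → W // span F (range w) = ⊤} where
  toFun v := ⟨fun i => ⟨v.1 i, v.2.le (subset_span (mem_range_self i))⟩,
    (W.span_range_coe_eq_iff _).1 v.2⟩
  invFun w := ⟨fun i => w.1 i, (W.span_range_coe_eq_iff _).2 w.2⟩
  left_inv _ := rfl
  right_inv _ := rfl

def LinearEquiv.spanRangeEqTopEquiv (e : V ≃ₗ[F] V') :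
    {v : ι → V // span F (range v) = ⊤} ≃ {v : ι → V' // span F (range v) = ⊤} :=
  ((Equiv.refl ι).arrowCongr e.toEquiv).subtypeEquiv fun w =>
    (e.span_range_comp_eq_top_iff w).symm

theorem span_range_eq_top_iff_linearIndependent_transpose {m k : Type*} [Fintype m] [Fintype k]
    (w : m → k → F) :
    span F (range w) = ⊤ ↔ LinearIndependent F (fun j i => w i j) := by
  have hrank : finrank F (span F (range w)) = finrank F (span F (range fun j i => w i j)) :=
    (Matrix.of w).rank_eq_finrank_span_row.symm.trans (Matrix.of w).rank_eq_finrank_span_cols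
  rw [linearIndependent_iff_card_eq_finrank_span, Set.finrank, ← hrank]
  constructor
  · intro h
    rw [h, finrank_top, finrank_fintype_fun_eq_card]
  · intro h
    exact Submodule.eq_top_of_finrank_eq (by simpa using h.symm)

theorem card_finrank_span_eq_self (k : ℕ) :
    Nat.card {v : Fin k → V // finrank F (span F (range v)) = k} =
      Nat.card {v : Fin k → V // LinearIndependent F v} :=
  Nat.card_congr <| Equiv.subtypeEquivRight fun v => by
    rw [linearIndependent_iff_card_eq_finrank_span, Fintype.card_fin, eq_comm, Set.finrank]

theorem card_span_range_eq_top [Fintype F] {m k : ℕ} (hk : k ≤ m) :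
    Nat.card {w : Fin m → Fin k → F // span F (range w) = ⊤} =
      ∏ i : Fin k, (Fintype.card F ^ m - Fintype.card F ^ (i : ℕ)) := by
  rw [Nat.card_congr ((Equiv.piComm fun (_ : Fin m) (_ : Fin k) => F).subtypeEquiv
    (q := fun u => LinearIndependent F u)
    fun w => span_range_eq_top_iff_linearIndependent_transpose w), card_linearIndependent] <;>
    rw [finrank_fin_fun]
  exact hk

theorem card_finrank_span_eq [Finite V] [Finite ι] (k : ℕ) :
    Nat.card {v : ι → V // finrank F (span F (range v)) = k} =
      Nat.card {W : Submodule F V // finrank F W = k} *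
        Nat.card {w : ι → Fin k → F // span F (range w) = ⊤} := by
  have : Finite (Submodule F V) := Finite.of_injective _ SetLike.coe_injective
  have : Fintype {W : Submodule F V // finrank F W = k} := Fintype.ofFinite _
  rw [← Nat.card_congr (Equiv.sigmaSubtypeFiberEquivSubtype
    (q := fun W : Submodule F V => finrank F W = k) (fun v : ι → V => span F (range v))
    fun _ => Iff.rfl), Nat.card_sigma]
  rw [Finset.sum_congr rfl fun W _ => Nat.card_congr (W.1.spanRangeEqEquiv.trans
    (finBasisOfFinrankEq F W.1 W.2).equivFun.spanRangeEqTopEquiv), Finset.sum_const,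
    Finset.card_univ, ← Nat.card_eq_fintype_card, smul_eq_mul]

theorem card_finrank_span_eq_mul_prod [Fintype F] [Finite V] {m k : ℕ} (hkm : k ≤ m)
    (hkV : k ≤ finrank F V) :
    Nat.card {v : Fin m → V // finrank F (span F (range v)) = k} *
        ∏ i : Fin k, (Fintype.card F ^ k - Fintype.card F ^ (i : ℕ)) =
      (∏ i : Fin k, (Fintype.card F ^ finrank F V - Fintype.card F ^ (i : ℕ))) *
        ∏ i : Fin k, (Fintype.card F ^ m - Fintype.card F ^ (i : ℕ)) := by
  have hV := card_linearIndependent (K := F) (V := V) hkV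
  rw [← card_finrank_span_eq_self, card_finrank_span_eq] at hV
  rw [card_finrank_span_eq, ← card_span_range_eq_top le_rfl, ← card_span_range_eq_top hkm, ← hV]
  ring

end Spanning

/-- For `q = |F|` and `k ≤ j`, the probability that `k` random vectors of `F^j` are linearly
independent. -/
noncomputable def indepProb (q : ℝ) (k j : ℕ) : ℝ := ∏ i : Fin k, (1 - q ^ (i : ℕ) / q ^ j)

theorem prod_pow_sub_pow_eq {q : ℝ} (hq : q ≠ 0) (k j : ℕ) :
    ∏ i : Fin k, (q ^ j - q ^ (i : ℕ)) = q ^ (j * k) * indepProb q k j := by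
  have : q ^ (j * k) = ∏ _i : Fin k, q ^ j := by rw [Fin.prod_const, pow_mul]
  rw [indepProb, this, ← Finset.prod_mul_distrib]
  congr! 1 with i
  field_simp

theorem cast_prod_pow_sub_pow {q k j : ℕ} (hq : q ≠ 0) (hkj : k ≤ j) :
    ((∏ i : Fin k, (q ^ j - q ^ (i : ℕ)) : ℕ) : ℝ) = (q : ℝ) ^ (j * k) * indepProb q k j := by
  rw [← prod_pow_sub_pow_eq (Nat.cast_ne_zero.2 hq)]
  push_cast [fun i : Fin k => Nat.pow_le_pow_right (Nat.pos_of_ne_zero hq) (i.2.le.trans hkj)]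
  rfl

theorem pow_div_pow_le_inv {q : ℝ} (hq : 1 ≤ q) {i j : ℕ} (hij : i < j) : q ^ i / q ^ j ≤ q⁻¹ := by
  rw [div_le_iff₀ (by positivity), inv_mul_eq_div, le_div_iff₀ (by positivity), ← pow_succ]
  exact pow_le_pow_right₀ hq hij

theorem indepProb_le_one {q : ℝ} (hq : 1 ≤ q) {k j : ℕ} (hkj : k ≤ j) : indepProb q k j ≤ 1 := by
  refine Finset.prod_le_one (fun i _ => ?_) fun i _ => by
    have : 0 ≤ q ^ (i : ℕ) / q ^ j := by positivity
    linarith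
  have := (pow_div_pow_le_inv hq (i.2.trans_le hkj)).trans (inv_le_one_of_one_le₀ hq)
  linarith

theorem one_sub_inv_pow_le_indepProb {q : ℝ} (hq : 1 ≤ q) {k j : ℕ} (hkj : k ≤ j) :
    (1 - q⁻¹) ^ k ≤ indepProb q k j := by
  rw [← Fin.prod_const]
  refine Finset.prod_le_prod (fun _ _ => sub_nonneg.2 (inv_le_one_of_one_le₀ hq)) fun i _ => ?_
  linarith [pow_div_pow_le_inv hq (i.2.trans_le hkj)]

theorem abs_mul_div_sub_one_le {x a b c : ℝ} (k : ℕ) (hx0 : 0 ≤ x) (hx : x ≤ 1 / 2)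
    (ha : (1 - x) ^ k ≤ a) (ha1 : a ≤ 1) (hb : (1 - x) ^ k ≤ b) (hb1 : b ≤ 1)
    (hc : (1 - x) ^ k ≤ c) (hc1 : c ≤ 1) :
    |a * b / c - 1| ≤ (k * 2 ^ k + 2 * k) * x := by
  have hbern : 1 - k * x ≤ (1 - x) ^ k := by
    simpa [sub_eq_add_neg] using one_add_mul_le_pow (a := -x) (by linarith) k
  have hhalf : (1 / 2) ^ k ≤ (1 - x) ^ k := pow_le_pow_left₀ (by norm_num) (by linarith) k
  have hpow : (1 / 2 : ℝ) ^ k * 2 ^ k = 1 := by rw [← mul_pow]; norm_num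
  have hc0 : 0 < c := (by positivity : (0 : ℝ) < (1 / 2) ^ k).trans_le (hhalf.trans hc)
  have ha0 : 0 ≤ a := (by positivity : (0 : ℝ) ≤ (1 / 2) ^ k).trans (hhalf.trans ha)
  have hb0 : 0 ≤ b := (by positivity : (0 : ℝ) ≤ (1 / 2) ^ k).trans (hhalf.trans hb)
  have hkx : 0 ≤ k * 2 ^ k * x := by positivity
  rw [abs_le]
  constructor
  · have : a * b ≤ a * b / c := le_div_self (mul_nonneg ha0 hb0) hc0 hc1
    nlinarith [mul_nonneg (sub_nonneg.2 ha1) (sub_nonneg.2 hb1)]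
  · rw [sub_le_iff_le_add, div_le_iff₀ hc0]
    -- `c ≥ 2^(-k)` turns the error `1 - c ≤ k x` of the denominator into `k 2^k x`
    have : k * x ≤ c * (k * 2 ^ k * x) := by
      nlinarith [mul_le_mul_of_nonneg_right (hhalf.trans hc) hkx]
    nlinarith [mul_le_one₀ ha1 hb0 hb1]

theorem pow_mul_div_pow_eq {q N a b c : ℝ} {m n k : ℕ} (hq : q ≠ 0) (hc : c ≠ 0) (hkm : k ≤ m)
    (hkn : k ≤ n) (h : N * (q ^ (k * k) * c) = q ^ (n * k) * a * (q ^ (m * k) * b)) :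
    q ^ ((m - k) * (n - k)) * (N / q ^ (m * n)) = a * b / c := by
  obtain ⟨m, rfl⟩ := Nat.exists_eq_add_of_le hkm
  obtain ⟨n, rfl⟩ := Nat.exists_eq_add_of_le hkn
  simp only [Nat.add_sub_cancel_left]
  have hN : N * c = q ^ (k * k + n * k + m * k) * a * b :=
    mul_left_cancel₀ (pow_ne_zero (k * k) hq) (by linear_combination h)
  rw [eq_div_iff hc, mul_div_assoc', div_mul_eq_mul_div, div_eq_iff (pow_ne_zero _ hq)]
  linear_combination q ^ (m * n) * hN

theorem stmt_14_general (n m k : ℕ) (hk : k ≤ min m n) :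
    ∃ C : ℝ, ∀ (q : ℕ), IsPrimePow q →
      ∀ (F : Type) [Field F] [Fintype F], Fintype.card F = q →
      |(q : ℝ) ^ ((m - k) * (n - k)) *
          (((Finset.univ.filter (fun v : Fin m → (Fin n → F) =>
              Module.finrank F ↥(Submodule.span F (Set.range v)) = k)).card : ℝ)
            / (q : ℝ) ^ (m * n))
        - 1| ≤ C / q := by
  obtain ⟨hkm, hkn⟩ := le_min_iff.1 hk
  refine ⟨k * 2 ^ k + 2 * k, fun q hq F _ _ hF => ?_⟩
  have hq2 : (2 : ℝ) ≤ q := by exact_mod_cast hq.two_le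
  have hq1 : (1 : ℝ) ≤ q := by linarith
  have hx : (q : ℝ)⁻¹ ≤ 1 / 2 := by rw [one_div]; exact inv_anti₀ (by norm_num) hq2
  have hcount := card_finrank_span_eq_mul_prod (F := F) (V := Fin n → F) hkm
    (by rwa [finrank_fin_fun])
  rw [finrank_fin_fun, hF] at hcount
  have hcountℝ := congrArg (Nat.cast : ℕ → ℝ) hcount
  push_cast only [Nat.cast_mul] at hcountℝ
  rw [cast_prod_pow_sub_pow hq.ne_zero le_rfl, cast_prod_pow_sub_pow hq.ne_zero hkn,
    cast_prod_pow_sub_pow hq.ne_zero hkm] at hcountℝ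
  have hQ {j : ℕ} (hkj : k ≤ j) := one_sub_inv_pow_le_indepProb hq1 hkj
  have hQk_pos : 0 < indepProb q k k := (pow_pos (by linarith) k).trans_le (hQ le_rfl)
  rw [← Fintype.card_subtype, ← Nat.card_eq_fintype_card,
    pow_mul_div_pow_eq (by positivity) hQk_pos.ne' hkm hkn hcountℝ, div_eq_mul_inv _ (q : ℝ)]
  exact abs_mul_div_sub_one_le k (by positivity) hx (hQ hkn) (indepProb_le_one hq1 hkn)
    (hQ hkm) (indepProb_le_one hq1 hkm) (hQ le_rfl) (indepProb_le_one hq1 le_rfl)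

/-- asymptotic rank distribution: for fixed `n, m, k` there is a constant
`C` such that for every prime power `q` and every finite field `F` with `|F| = q`, the
span `Π` of `m` uniformly random vectors of `F^n` satisfies
`| q^{(m−k)(n−k)} · Prob[dim Π = k] − 1 | ≤ C/q`. -/
theorem stmt_14 (n m k : ℕ) (hn : 1 ≤ n) (hm : 1 ≤ m) (hk : k ≤ min m n) :
    ∃ C : ℝ, ∀ (q : ℕ), IsPrimePow q →
      ∀ (F : Type) [Field F] [Fintype F], Fintype.card F = q →
      |(q : ℝ) ^ ((m - k) * (n - k)) *
          (((Finset.univ.filter (fun v : Fin m → (Fin n → F) =>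
              Module.finrank F ↥(Submodule.span F (Set.range v)) = k)).card : ℝ)
            / (q : ℝ) ^ (m * n))
        - 1| ≤ C / q :=
  stmt_14_general n m k hk
end
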